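/- arXiv:0903.4903 — 7 statements merged into one kernel-verified Lean document; each statement's English description precedes it below -/
import Mathlib

section
/- Let k be a field, V a finite-dimensional k-vector space, and N a nilpotent k-linear endomorphism of V. Then there exists a unique increasing filtration W(N) of V indexed by ℤ (with W(N)_j = 0 for j sufficiently small and W(N)_j = V for j sufficiently large) such that: (a) N(W(N)_j) ⊆ W(N)_{j−2} for every j ∈ ℤ, and (b) for every j ≥ 0 the map Gr_j → Gr_{−j} induced by N^j on graded quotients is an isomorphism. -/
/-- An increasing filtration of `V` indexed by `ℤ`: monotone, eventually `⊥` below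
and eventually `⊤` above. -/
def IsZFiltration {k V : Type*} [Field k] [AddCommGroup V] [Module k V]
    (W : ℤ → Submodule k V) : Prop :=
  Monotone W ∧ (∃ a : ℤ, W a = ⊥) ∧ (∃ b : ℤ, W b = ⊤)

/-- `W` is the monodromy weight filtration of the nilpotent endomorphism `N`, centered at `0`:
`N (W j) ⊆ W (j - 2)` for all `j`, and for every `j ≥ 0` the map `Gr_j → Gr_{-j}` induced
by `N ^ j` on graded quotients is an isomorphism (stated elementwise:
injectivity and surjectivity modulo the lower filtration steps). -/
def IsWeightFiltration {k V : Type*} [Field k] [AddCommGroup V] [Module k V]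
    (N : Module.End k V) (W : ℤ → Submodule k V) : Prop :=
  IsZFiltration W ∧
  (∀ j : ℤ, ∀ v ∈ W j, N v ∈ W (j - 2)) ∧
  (∀ j : ℕ,
    (∀ v ∈ W (j : ℤ), (N ^ j) v ∈ W (-(j : ℤ) - 1) → v ∈ W ((j : ℤ) - 1)) ∧
    (∀ w ∈ W (-(j : ℤ)), ∃ v ∈ W (j : ℤ), (N ^ j) v - w ∈ W (-(j : ℤ) - 1)))

/-! Induction on the nilpotency order. If `N ^ (n + 2) = 0`, every weight filtration is `⊤`
from `n + 1` on, `⊥` below `-(n + 1)`, and satisfies `W n = ker N^(n+1)` and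
`W (-(n + 1)) = im N^(n+1)`. In between it is therefore the preimage of a filtration of
`ker N^(n+1) ⧸ im N^(n+1)`, and the conditions on `W` translate exactly into the conditions for
that filtration to be the weight filtration of the endomorphism induced by `N`, which is killed
by `N^(n+1)`. -/

section

open LinearMap

variable {k V : Type*} [Field k] [AddCommGroup V] [Module k V]

namespace IsWeightFiltration

variable {N : Module.End k V} {W : ℤ → Submodule k V}

theorem pow_apply_mem (hW : IsWeightFiltration N W) (j : ℕ) {z : ℤ} {v : V} (hv : v ∈ W z) :
    (N ^ j) v ∈ W (z - 2 * j) := by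
  induction j with
  | zero => simpa using hv
  | succ j ih =>
    rw [pow_succ', Module.End.mul_apply]
    convert hW.2.1 _ _ ih using 2
    push_cast; ring

theorem le_sub_one_of_pow_eq_zero_of_le (hW : IsWeightFiltration N W) {n : ℕ} (hN : N ^ n = 0)
    {z : ℤ} (hz : n ≤ z) : W z ≤ W (z - 1) := by
  obtain ⟨j, rfl⟩ := Int.eq_ofNat_of_zero_le (by omega : 0 ≤ z)
  intro v hv
  exact (hW.2.2 j).1 v hv (by simp [pow_eq_zero_of_le (by omega : n ≤ j) hN])

theorem le_sub_one_of_pow_eq_zero_of_le_neg (hW : IsWeightFiltration N W) {n : ℕ} (hN : N ^ n = 0)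
    {z : ℤ} (hz : z ≤ -n) : W z ≤ W (z - 1) := by
  obtain ⟨j, rfl⟩ := Int.exists_eq_neg_ofNat (by omega : z ≤ 0)
  intro w hw
  obtain ⟨v, -, hv⟩ := (hW.2.2 j).2 w hw
  simpa [pow_eq_zero_of_le (by omega : n ≤ j) hN] using hv

theorem eq_top_of_pow_eq_zero (hW : IsWeightFiltration N W) {n : ℕ} (hN : N ^ n = 0)
    {z : ℤ} (hz : n - 1 ≤ z) : W z = ⊤ := by
  have hle : ∀ m, z ≤ m → W m ≤ W z := by
    intro m hm
    induction m, hm using Int.leInduction with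
    | base => exact le_rfl
    | succ m _ ih =>
      have h := hW.le_sub_one_of_pow_eq_zero_of_le hN (by omega : (n : ℤ) ≤ m + 1)
      rw [add_sub_cancel_right] at h
      exact h.trans ih
  obtain ⟨b, hb⟩ := hW.1.2.2
  rw [eq_top_iff, ← hb]
  exact (hW.1.1 (le_max_left b z)).trans (hle _ (le_max_right b z))

theorem eq_bot_of_pow_eq_zero (hW : IsWeightFiltration N W) {n : ℕ} (hN : N ^ n = 0)
    {z : ℤ} (hz : z ≤ -n) : W z = ⊥ := by
  have hle : ∀ m, m ≤ z → W z ≤ W m := by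
    intro m hm
    induction m, hm using Int.leInductionDown with
    | base => exact le_rfl
    | pred m hm ih => exact ih.trans (hW.le_sub_one_of_pow_eq_zero_of_le_neg hN (by omega))
  obtain ⟨a, ha⟩ := hW.1.2.1
  rw [eq_bot_iff, ← ha]
  exact (hle _ (min_le_right a z)).trans (hW.1.1 (min_le_left a z))

theorem eq_ker_pow (hW : IsWeightFiltration N W) {n : ℕ} (hN : N ^ (n + 1) = 0) :
    W (n - 1) = ker (N ^ n) := by
  refine le_antisymm (fun v hv => ?_) (fun v hv => ?_)
  · have := hW.pow_apply_mem n hv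
    rwa [hW.eq_bot_of_pow_eq_zero hN (by push_cast; omega), Submodule.mem_bot] at this
  · refine (hW.2.2 n).1 v (by simp [hW.eq_top_of_pow_eq_zero hN]) ?_
    simp [LinearMap.mem_ker.mp hv]

theorem eq_range_pow (hW : IsWeightFiltration N W) {n : ℕ} (hN : N ^ (n + 1) = 0) :
    W (-n) = range (N ^ n) := by
  refine le_antisymm (fun w hw => ?_) ?_
  · obtain ⟨v, -, hv⟩ := (hW.2.2 n).2 w hw
    rw [hW.eq_bot_of_pow_eq_zero hN (by push_cast; omega), Submodule.mem_bot, sub_eq_zero] at hv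
    exact ⟨v, hv⟩
  · rintro _ ⟨v, rfl⟩
    have := hW.pow_apply_mem n (by simp [hW.eq_top_of_pow_eq_zero hN] : v ∈ W n)
    rwa [show (n : ℤ) - 2 * n = -n by ring] at this

theorem eq_ker_pow_succ (hW : IsWeightFiltration N W) {n : ℕ} (hN : N ^ (n + 2) = 0) :
    W n = ker (N ^ (n + 1)) := by
  simpa using hW.eq_ker_pow (n := n + 1) hN

theorem eq_range_pow_succ (hW : IsWeightFiltration N W)
    {n : ℕ} (hN : N ^ (n + 2) = 0) : W (-(n + 1 : ℤ)) = range (N ^ (n + 1)) := by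
  simpa using hW.eq_range_pow (n := n + 1) hN

end IsWeightFiltration

theorem isWeightFiltration_of_bounds {N : Module.End k V} {W : ℤ → Submodule k V} (m : ℕ)
    (hmono : Monotone W) (htop : W (m - 1) = ⊤) (hbot : W (-m) = ⊥)
    (hshift : ∀ z : ℤ, ∀ v ∈ W z, N v ∈ W (z - 2))
    (hinj : ∀ j < m, ∀ v ∈ W j, (N ^ j) v ∈ W (-j - 1) → v ∈ W (j - 1))
    (hsurj : ∀ j < m, ∀ w ∈ W (-j), ∃ v ∈ W j, (N ^ j) v - w ∈ W (-j - 1)) :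
    IsWeightFiltration N W := by
  refine ⟨⟨hmono, ⟨_, hbot⟩, ⟨_, htop⟩⟩, hshift, fun j => ?_⟩
  rcases lt_or_ge j m with hj | hj
  · exact ⟨hinj j hj, hsurj j hj⟩
  refine ⟨fun v _ _ => ?_, fun w hw => ⟨0, zero_mem _, ?_⟩⟩
  · exact hmono (by omega : (m : ℤ) - 1 ≤ j - 1) (htop ▸ Submodule.mem_top)
  · have : w = 0 := by simpa [hbot] using hmono (by omega : -(j : ℤ) ≤ -m) hw
    simp [this]

theorem isWeightFiltration_zero :
    IsWeightFiltration (0 : Module.End k V) (fun z => if 0 ≤ z then ⊤ else ⊥) := by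
  refine isWeightFiltration_of_bounds 1 (fun a b hab => ?_) (by simp) (by simp)
    (fun z v _ => by simp) (fun j hj v _ hv => ?_) (fun j hj w hw => ?_)
  · split_ifs <;> first | exact le_top | exact bot_le | omega
  · obtain rfl : j = 0 := by omega
    simpa using hv
  · obtain rfl : j = 0 := by omega
    exact ⟨w, hw, by simp⟩

namespace Submodule

variable {K : Submodule k V} (J : Submodule k K)

def subquotLift (S : Submodule k (K ⧸ J)) : Submodule k V :=
  (S.comap J.mkQ).map K.subtype

def subquotDescend (T : Submodule k V) : Submodule k (K ⧸ J) :=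
  (T.comap K.subtype).map J.mkQ

theorem subquotLift_mono : Monotone (subquotLift J) :=
  fun _ _ h => map_mono (comap_mono h)

theorem subquotDescend_mono : Monotone (subquotDescend J) :=
  fun _ _ h => map_mono (comap_mono h)

theorem subquotLift_top : subquotLift J ⊤ = K := by
  simp [subquotLift]

theorem subquotLift_bot : subquotLift J ⊥ = J.map K.subtype := by
  simp [subquotLift]

theorem subquotDescend_eq_top {T : Submodule k V} (h : K ≤ T) : subquotDescend J T = ⊤ := by
  simp [subquotDescend, comap_subtype_eq_top.mpr h]

theorem subquotDescend_eq_bot {T : Submodule k V} (h : T.comap K.subtype ≤ J) :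
    subquotDescend J T = ⊥ := by
  rwa [subquotDescend, eq_bot_iff, map_le_iff_le_comap, comap_bot, ker_mkQ]

theorem mkQ_mem_subquotDescend_iff {T : Submodule k V} (h : J.map K.subtype ≤ T) (x : K) :
    J.mkQ x ∈ subquotDescend J T ↔ (x : V) ∈ T := by
  rw [subquotDescend, ← mem_comap, comap_map_mkQ, sup_eq_right.mpr (map_le_iff_le_comap.mp h),
    mem_comap, subtype_apply]

theorem subquotLift_subquotDescend {T : Submodule k V} (h₁ : J.map K.subtype ≤ T)
    (h₂ : T ≤ K) : subquotLift J (subquotDescend J T) = T := by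
  rw [subquotLift, subquotDescend, comap_map_mkQ, sup_eq_right.mpr (map_le_iff_le_comap.mp h₁),
    map_comap_subtype, inf_eq_right.mpr h₂]

end Submodule

namespace Module.End

open Submodule

section

variable (N : Module.End k V) (m : ℕ)

theorem apply_mem_ker_pow {v : V} (hv : v ∈ ker (N ^ m)) : N v ∈ ker (N ^ m) := by
  rw [mem_ker, ← mul_apply, ← (Commute.self_pow N m).eq, mul_apply, mem_ker.mp hv, map_zero]

abbrev rangePowInKer : Submodule k (ker (N ^ m)) :=
  (range (N ^ m)).comap (ker (N ^ m)).subtype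

abbrev PowSubquot : Type _ := ker (N ^ m) ⧸ N.rangePowInKer m

def restrictKerPow : Module.End k (ker (N ^ m)) :=
  N.restrict fun _ => N.apply_mem_ker_pow m

def powSubquotEnd : Module.End k (N.PowSubquot m) :=
  (N.rangePowInKer m).mapQ _ (N.restrictKerPow m) <| by
    rintro x ⟨u, hu⟩
    exact ⟨N u, by rw [← mul_apply, ← (Commute.self_pow N m).eq, mul_apply, hu]; rfl⟩

@[simp]
theorem coe_restrictKerPow_pow_apply (j : ℕ) (x : ker (N ^ m)) :
    ((N.restrictKerPow m ^ j) x : V) = (N ^ j) x := by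
  rw [restrictKerPow, pow_restrict]
  rfl

@[simp]
theorem powSubquotEnd_pow_mkQ (j : ℕ) (x : ker (N ^ m)) :
    (N.powSubquotEnd m ^ j) (Submodule.Quotient.mk x : N.PowSubquot m) =
      Submodule.Quotient.mk ((N.restrictKerPow m ^ j) x) := by
  rw [powSubquotEnd, ← mapQ_pow]
  rfl

@[simp]
theorem powSubquotEnd_mkQ (x : ker (N ^ m)) :
    N.powSubquotEnd m (Submodule.Quotient.mk x : N.PowSubquot m) =
      Submodule.Quotient.mk (N.restrictKerPow m x) :=
  rfl

theorem powSubquotEnd_pow_eq_zero : N.powSubquotEnd m ^ m = 0 := by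
  ext x
  have : (N.restrictKerPow m ^ m) x = 0 := Subtype.ext (by simp)
  simp [this]

theorem map_subtype_rangePowInKer_le :
    (N.rangePowInKer m).map (ker (N ^ m)).subtype ≤ range (N ^ m) := by
  rw [map_comap_subtype]
  exact inf_le_right

end

section

variable (N : Module.End k V) (n : ℕ)

def extendFiltration (Wb : ℤ → Submodule k (N.PowSubquot (n + 1))) (z : ℤ) : Submodule k V :=
  if n + 1 ≤ z then ⊤
  else if z < -(n + 1 : ℤ) then ⊥
  else subquotLift (N.rangePowInKer (n + 1)) (Wb z)

end

variable {N : Module.End k V} {m n : ℕ} {A B C : Submodule k (N.PowSubquot m)}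
  {T T' T'' : Submodule k V} {Wb : ℤ → Submodule k (N.PowSubquot (n + 1))}
  {W : ℤ → Submodule k V}

theorem apply_mem_subquotLift (h : ∀ x ∈ A, N.powSubquotEnd m x ∈ B) :
    ∀ v ∈ subquotLift (N.rangePowInKer m) A, N v ∈ subquotLift (N.rangePowInKer m) B := by
  rintro _ ⟨x, hx, rfl⟩
  exact ⟨N.restrictKerPow m x, by simpa using h _ hx, rfl⟩

theorem mem_subquotLift_of_pow_apply_mem {j : ℕ}
    (h : ∀ x ∈ A, (N.powSubquotEnd m ^ j) x ∈ B → x ∈ C) :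
    ∀ v ∈ subquotLift (N.rangePowInKer m) A, (N ^ j) v ∈ subquotLift (N.rangePowInKer m) B →
      v ∈ subquotLift (N.rangePowInKer m) C := by
  rintro _ ⟨x, hx, rfl⟩ ⟨y, hy, hyx⟩
  obtain rfl : y = (N.restrictKerPow m ^ j) x := Subtype.ext (by simpa using hyx)
  exact ⟨x, h _ hx (by simpa using hy), rfl⟩

theorem exists_pow_apply_sub_mem_subquotLift {j : ℕ}
    (h : ∀ y ∈ A, ∃ x ∈ B, (N.powSubquotEnd m ^ j) x - y ∈ C) :
    ∀ w ∈ subquotLift (N.rangePowInKer m) A, ∃ v ∈ subquotLift (N.rangePowInKer m) B,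
      (N ^ j) v - w ∈ subquotLift (N.rangePowInKer m) C := by
  rintro _ ⟨y, hy, rfl⟩
  obtain ⟨x', hx', hdiff⟩ := h _ hy
  obtain ⟨x, rfl⟩ := mkQ_surjective _ x'
  exact ⟨x, ⟨x, hx', rfl⟩, (N.restrictKerPow m ^ j) x - y, by simpa using hdiff, by simp⟩

theorem apply_mem_subquotDescend (h : ∀ v ∈ T, N v ∈ T') :
    ∀ x ∈ subquotDescend (N.rangePowInKer m) T,
      N.powSubquotEnd m x ∈ subquotDescend (N.rangePowInKer m) T' := by
  rintro _ ⟨x, hx, rfl⟩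
  exact ⟨N.restrictKerPow m x, h _ hx, by simp⟩

theorem mem_subquotDescend_of_pow_apply_mem {j : ℕ} (hT' : range (N ^ m) ≤ T')
    (h : ∀ v ∈ T, (N ^ j) v ∈ T' → v ∈ T'') :
    ∀ x ∈ subquotDescend (N.rangePowInKer m) T,
      (N.powSubquotEnd m ^ j) x ∈ subquotDescend (N.rangePowInKer m) T' →
        x ∈ subquotDescend (N.rangePowInKer m) T'' := by
  rintro _ ⟨x, hx, rfl⟩ hjx
  rw [mkQ_apply, powSubquotEnd_pow_mkQ, ← mkQ_apply, mkQ_mem_subquotDescend_iff _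
    ((map_subtype_rangePowInKer_le N m).trans hT'), coe_restrictKerPow_pow_apply] at hjx
  exact ⟨x, h _ hx hjx, rfl⟩

theorem exists_pow_apply_sub_mem_subquotDescend {j : ℕ}
    (hT' : T' ≤ ker (N ^ m)) (h : ∀ w ∈ T, ∃ v ∈ T', (N ^ j) v - w ∈ T'') :
    ∀ y ∈ subquotDescend (N.rangePowInKer m) T, ∃ x ∈ subquotDescend (N.rangePowInKer m) T',
      (N.powSubquotEnd m ^ j) x - y ∈ subquotDescend (N.rangePowInKer m) T'' := by
  rintro _ ⟨y, hy, rfl⟩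
  obtain ⟨v, hv, hdiff⟩ := h _ hy
  exact ⟨_, ⟨⟨v, hT' hv⟩, hv, rfl⟩,
    (N.restrictKerPow m ^ j) ⟨v, hT' hv⟩ - y, by simpa using hdiff, by simp⟩

theorem apply_mem_ker_pow_of_pow_eq_zero (hN : N ^ (n + 2) = 0) (v : V) :
    N v ∈ ker (N ^ (n + 1)) := by
  rw [mem_ker, ← mul_apply, ← pow_succ, hN, LinearMap.zero_apply]

theorem apply_eq_zero_of_mem_range_pow (hN : N ^ (n + 2) = 0) {v : V}
    (hv : v ∈ range (N ^ (n + 1))) : N v = 0 := by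
  obtain ⟨u, rfl⟩ := hv
  rw [← mul_apply, ← pow_succ', hN, LinearMap.zero_apply]

theorem apply_mem_subquotLift_ker (hN : N ^ (n + 2) = 0) (v : V) :
    N v ∈ subquotLift (N.rangePowInKer (n + 1)) (ker (N.powSubquotEnd (n + 1) ^ n)) := by
  refine ⟨⟨N v, apply_mem_ker_pow_of_pow_eq_zero hN v⟩, ?_, rfl⟩
  rw [SetLike.mem_coe, mem_comap, mem_ker, mkQ_apply, powSubquotEnd_pow_mkQ, Quotient.mk_eq_zero]
  exact ⟨v, by simp [← mul_apply, ← pow_succ]⟩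

theorem subquotLift_range_le_ker (hN : N ^ (n + 2) = 0) :
    subquotLift (N.rangePowInKer (n + 1)) (range (N.powSubquotEnd (n + 1) ^ n)) ≤ ker N := by
  rintro _ ⟨x, ⟨y', hy⟩, rfl⟩
  obtain ⟨y, rfl⟩ := mkQ_surjective _ y'
  rw [mkQ_apply, powSubquotEnd_pow_mkQ, mkQ_apply, Submodule.Quotient.eq] at hy
  obtain ⟨u, hu⟩ := hy
  have hx : (x : V) = (N ^ n) y - (N ^ (n + 1)) u := by simp [hu]
  rw [subtype_apply, mem_ker, hx, map_sub, ← mul_apply, ← pow_succ', mem_ker.mp y.2,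
    apply_eq_zero_of_mem_range_pow hN ⟨u, rfl⟩, sub_zero]

theorem extendFiltration_of_le {z : ℤ} (hz : n + 1 ≤ z) : N.extendFiltration n Wb z = ⊤ := by
  rw [extendFiltration, if_pos hz]

theorem extendFiltration_of_lt {z : ℤ} (hz : z < -(n + 1 : ℤ)) :
    N.extendFiltration n Wb z = ⊥ := by
  rw [extendFiltration, if_neg (by omega), if_pos hz]

theorem extendFiltration_of_mem_Icc {z : ℤ} (h₁ : -(n + 1 : ℤ) ≤ z) (h₂ : z ≤ n) :
    N.extendFiltration n Wb z = subquotLift (N.rangePowInKer (n + 1)) (Wb z) := by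
  rw [extendFiltration, if_neg (by omega), if_neg (by omega)]

theorem extendFiltration_mono (hWb : Monotone Wb) : Monotone (N.extendFiltration n Wb) := by
  intro a b hab
  simp only [extendFiltration]
  split_ifs <;> first | exact le_top | exact bot_le | omega | exact subquotLift_mono _ (hWb hab)

theorem extendFiltration_shift (hN : N ^ (n + 2) = 0)
    (hWb : IsWeightFiltration (N.powSubquotEnd (n + 1)) Wb) (z : ℤ) :
    ∀ v ∈ N.extendFiltration n Wb z, N v ∈ N.extendFiltration n Wb (z - 2) := by
  have hNb := N.powSubquotEnd_pow_eq_zero (n + 1)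
  intro v hv
  rcases le_or_gt (n + 1 : ℤ) (z - 2) with h | h
  · simp [extendFiltration_of_le h]
  rcases lt_or_ge z (-(n + 1 : ℤ)) with h' | h'
  · rw [extendFiltration_of_lt h', mem_bot] at hv
    simp [hv]
  rcases lt_or_ge (z - 2) (-(n + 1 : ℤ)) with h'' | h''
  · rw [extendFiltration_of_mem_Icc h' (by omega)] at hv
    rw [extendFiltration_of_lt h'', mem_bot]
    refine subquotLift_range_le_ker hN (subquotLift_mono _ ?_ hv)
    rw [← hWb.eq_range_pow hNb]
    exact hWb.1.1 (by omega)
  rw [extendFiltration_of_mem_Icc h'' (by omega)]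
  rcases le_or_gt (n + 1 : ℤ) z with hz | hz
  · refine subquotLift_mono _ ?_ (apply_mem_subquotLift_ker hN v)
    rw [← hWb.eq_ker_pow hNb]
    exact hWb.1.1 (by omega)
  · rw [extendFiltration_of_mem_Icc h' (by omega)] at hv
    exact apply_mem_subquotLift (hWb.2.1 z) v hv

theorem isWeightFiltration_extendFiltration (hN : N ^ (n + 2) = 0)
    (hWb : IsWeightFiltration (N.powSubquotEnd (n + 1)) Wb) :
    IsWeightFiltration N (N.extendFiltration n Wb) := by
  have hNb := N.powSubquotEnd_pow_eq_zero (n + 1)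
  refine isWeightFiltration_of_bounds (n + 2) (extendFiltration_mono hWb.1.1)
    (extendFiltration_of_le (by push_cast; omega)) (extendFiltration_of_lt (by push_cast; omega))
    (extendFiltration_shift hN hWb) (fun j hj => ?_) (fun j hj => ?_)
  · rcases (by omega : j = n + 1 ∨ j ≤ n) with rfl | hj
    · intro v _ hv
      rw [extendFiltration_of_lt (by push_cast; omega), mem_bot] at hv
      rw [extendFiltration_of_mem_Icc (by push_cast; omega) (by push_cast; omega),
        hWb.eq_top_of_pow_eq_zero hNb (by push_cast; omega), subquotLift_top]
      exact hv
    · rw [extendFiltration_of_mem_Icc (by omega) (by omega),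
        extendFiltration_of_mem_Icc (by omega) (by omega),
        extendFiltration_of_mem_Icc (by omega) (by omega)]
      exact mem_subquotLift_of_pow_apply_mem (hWb.2.2 j).1
  · rcases (by omega : j = n + 1 ∨ j ≤ n) with rfl | hj
    · intro w hw
      rw [extendFiltration_of_mem_Icc (by push_cast; omega) (by push_cast; omega),
        hWb.eq_bot_of_pow_eq_zero hNb (by push_cast; omega), subquotLift_bot] at hw
      obtain ⟨u, rfl⟩ := map_subtype_rangePowInKer_le N _ hw
      exact ⟨u, by simp [extendFiltration_of_le], by simp⟩
    · rw [extendFiltration_of_mem_Icc (by omega) (by omega),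
        extendFiltration_of_mem_Icc (by omega) (by omega),
        extendFiltration_of_mem_Icc (by omega) (by omega)]
      exact exists_pow_apply_sub_mem_subquotLift (hWb.2.2 j).2

theorem isWeightFiltration_subquotDescend (hN : N ^ (n + 2) = 0) (hW : IsWeightFiltration N W) :
    IsWeightFiltration (N.powSubquotEnd (n + 1))
      (fun z => subquotDescend (N.rangePowInKer (n + 1)) (W z)) := by
  have hK := hW.eq_ker_pow_succ hN
  have hI := hW.eq_range_pow_succ hN
  refine isWeightFiltration_of_bounds (n + 1) (fun a b h => subquotDescend_mono _ (hW.1.1 h))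
    (subquotDescend_eq_top _ ?_) (subquotDescend_eq_bot _ ?_)
    (fun z => apply_mem_subquotDescend (hW.2.1 z)) (fun j hj => ?_) (fun j hj => ?_)
  · simpa using hK.ge
  · push_cast
    rw [hI]
  · exact mem_subquotDescend_of_pow_apply_mem (hI ▸ hW.1.1 (by omega)) (hW.2.2 j).1
  · exact exists_pow_apply_sub_mem_subquotDescend (hK ▸ hW.1.1 (by omega)) (hW.2.2 j).2

theorem extendFiltration_subquotDescend (hN : N ^ (n + 2) = 0) (hW : IsWeightFiltration N W) :
    N.extendFiltration n (fun z => subquotDescend (N.rangePowInKer (n + 1)) (W z)) = W := by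
  funext z
  rcases le_or_gt (n + 1 : ℤ) z with h | h
  · rw [extendFiltration_of_le h, hW.eq_top_of_pow_eq_zero hN (by push_cast; omega)]
  rcases lt_or_ge z (-(n + 1 : ℤ)) with h' | h'
  · rw [extendFiltration_of_lt h', hW.eq_bot_of_pow_eq_zero hN (by push_cast; omega)]
  rw [extendFiltration_of_mem_Icc h' (by omega)]
  refine subquotLift_subquotDescend _ ((map_subtype_rangePowInKer_le N _).trans ?_) ?_
  · exact hW.eq_range_pow_succ hN ▸ hW.1.1 h'
  · exact hW.eq_ker_pow_succ hN ▸ hW.1.1 (by omega)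

end Module.End

theorem existsUnique_isWeightFiltration_of_pow_succ_eq_zero (n : ℕ) (N : Module.End k V)
    (hN : N ^ (n + 1) = 0) : ∃! W : ℤ → Submodule k V, IsWeightFiltration N W := by
  induction n generalizing V with
  | zero =>
    obtain rfl : N = 0 := by simpa using hN
    refine ⟨_, isWeightFiltration_zero, fun W hW => funext fun z => ?_⟩
    split_ifs with hz
    · exact hW.eq_top_of_pow_eq_zero (n := 1) (by simp) (by omega)
    · exact hW.eq_bot_of_pow_eq_zero (n := 1) (by simp) (by omega)
  | succ n ih =>
    obtain ⟨Wb, hWb, hWb_unique⟩ := ih (N.powSubquotEnd (n + 1)) (N.powSubquotEnd_pow_eq_zero _)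
    refine ⟨N.extendFiltration n Wb, Module.End.isWeightFiltration_extendFiltration hN hWb,
      fun W hW => ?_⟩
    rw [← Module.End.extendFiltration_subquotDescend hN hW,
      hWb_unique _ (Module.End.isWeightFiltration_subquotDescend hN hW)]

end

theorem weight_filtration_exists_unique_general {k V : Type*} [Field k] [AddCommGroup V] [Module k V]
    (N : Module.End k V) (hN : IsNilpotent N) :
    ∃! W : ℤ → Submodule k V, IsWeightFiltration N W := by
  obtain ⟨n, hn⟩ := hN
  exact existsUnique_isWeightFiltration_of_pow_succ_eq_zero n N (by rw [pow_succ, hn, zero_mul])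

/-- Existence and uniqueness of the monodromy weight filtration of a nilpotent
endomorphism of a finite-dimensional vector space, centered at `0`. -/
theorem weight_filtration_exists_unique {k V : Type*} [Field k] [AddCommGroup V] [Module k V]
    [FiniteDimensional k V] (N : Module.End k V) (hN : IsNilpotent N) :
    ∃! W : ℤ → Submodule k V, IsWeightFiltration N W :=
  weight_filtration_exists_unique_general N hN
end

section
/- Let k be a field, V a finite-dimensional k-vector space, W an increasing filtration of V indexed by ℤ, and N a nilpotent k-linear endomorphism with N(W_i) ⊆ W_i for all i. Suppose M and M′ are two increasing filtrations of V, each of which satisfies: N(M_k) ⊆ M_{k−2} for all k, and for every i ∈ ℤ the filtration induced by M on Gr^W_i := W_i/W_{i−1} (namely, k ↦ image of M_k ∩ W_i in Gr^W_i) is the monodromy weight filtration of the endomorphism N̄_i induced by N on Gr^W_i, centered at i (i.e., N̄_i maps the induced k-th piece into the (k−2)-nd, and for every j ≥ 0, N̄_i^j induces an isomorphism from the (i+j)-th graded quotient of the induced filtration onto the (i−j)-th). Then M = M′. (In other words, the relative weight monodromy filtration M(N,W) is unique if it exists.) -/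
/-!
We show `M ≤ M'` and swap the roles. Induct upwards along `W` and, inside `Gr^W_i`, downwards
along the index `l` of `M`. For `l < i`, surjectivity of `N̄_i ^ j` for `M` (`j = i - l`) writes
`x ∈ M_l` as `N ^ j v` with `v ∈ M_{2i-l}`, which is already settled, modulo `M_{l-1} ∩ W_i` and
`W_{i-1}`. For `l ≥ i`, `N ^ (l-i+1)` sends `x` into `M_{2i-l-2}`, settled by the first case, so
injectivity of `N̄_i ^ (l-i+1)` for `M'` puts `x` into `M'_l` up to an element of `W_{i-1}`; that
element lies in `M'_l` because `N`-powers are strict on lower `W`-weights.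
-/

/-- An increasing filtration of `V` indexed by `ℤ`: monotone, eventually `⊥` below
and eventually `⊤` above. -/
def IsIntFiltration {k V : Type*} [Field k] [AddCommGroup V] [Module k V]
    (W : ℤ → Submodule k V) : Prop :=
  Monotone W ∧ (∃ a : ℤ, W a = ⊥) ∧ (∃ b : ℤ, W b = ⊤)

/-- `M` is a relative weight monodromy filtration of `N` with respect to `W`:
`M` is an increasing filtration with `N (M k) ⊆ M (k - 2)` for all `k`, and for every `i`
the filtration induced by `M` on `Gr^W_i = W i / W (i-1)` (namely `k ↦` image of
`M k ⊓ W i`) is the monodromy weight filtration, centered at `i`, of the endomorphism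
`N̄_i` induced by `N` on `Gr^W_i`; i.e. for every `j ≥ 0` the map induced by `N̄_i ^ j`
from the `(i+j)`-th to the `(i-j)`-th graded quotient of the induced filtration is an
isomorphism (stated elementwise inside `V`). -/
def IsRelativeWeightFiltration {k V : Type*} [Field k] [AddCommGroup V] [Module k V]
    (N : Module.End k V) (W M : ℤ → Submodule k V) : Prop :=
  IsIntFiltration M ∧
  (∀ n : ℤ, ∀ v ∈ M n, N v ∈ M (n - 2)) ∧
  (∀ i : ℤ, ∀ j : ℕ,
    (∀ v, v ∈ M (i + (j : ℤ)) → v ∈ W i →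
      (N ^ j) v ∈ (M (i - (j : ℤ) - 1) ⊓ W i) ⊔ W (i - 1) →
      v ∈ (M (i + (j : ℤ) - 1) ⊓ W i) ⊔ W (i - 1)) ∧
    (∀ w, w ∈ M (i - (j : ℤ)) → w ∈ W i →
      ∃ v, v ∈ M (i + (j : ℤ)) ∧ v ∈ W i ∧
        (N ^ j) v - w ∈ (M (i - (j : ℤ) - 1) ⊓ W i) ⊔ W (i - 1)))

section

variable {k V : Type*} [Ring k] [AddCommGroup V] [Module k V]

/- The two halves of "`N̄_i ^ j : Gr^M_{i+j} Gr^W_i → Gr^M_{i-j} Gr^W_i` is bijective",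
read inside `V`. -/
def GrPowInjective (N : Module.End k V) (W M : ℤ → Submodule k V) : Prop :=
  ∀ i : ℤ, ∀ j : ℕ, ∀ v, v ∈ M (i + j) → v ∈ W i →
    (N ^ j) v ∈ (M (i - j - 1) ⊓ W i) ⊔ W (i - 1) → v ∈ (M (i + j - 1) ⊓ W i) ⊔ W (i - 1)

def GrPowSurjective (N : Module.End k V) (W M : ℤ → Submodule k V) : Prop :=
  ∀ i : ℤ, ∀ j : ℕ, ∀ w, w ∈ M (i - j) → w ∈ W i →
    ∃ v, v ∈ M (i + j) ∧ v ∈ W i ∧ (N ^ j) v - w ∈ (M (i - j - 1) ⊓ W i) ⊔ W (i - 1)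

theorem Module.End.pow_apply_mem_of_add_mul_eq {N : Module.End k V} {M : ℤ → Submodule k V}
    {d : ℤ} (hN : ∀ n, ∀ v ∈ M n, N v ∈ M (n - d)) (t : ℕ) {m n : ℤ} (hmn : m + t * d = n)
    {v : V} (hv : v ∈ M n) : (N ^ t) v ∈ M m := by
  induction t generalizing m with
  | zero => simpa [← hmn] using hv
  | succ t ih =>
    rw [pow_succ', Module.End.mul_apply]
    simpa using hN _ _ (ih (m := m + d) (by rw [← hmn]; push_cast; ring))

variable {N : Module.End k V} {W M M' : ℤ → Submodule k V}

/-- With `j = m + 1 - a`, `N ^ j v` lies below the centre `a - j`, so injectivity at `(a, j)` moves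
`v` into `M m` up to an element of `W (a - 1)`, which is handled by induction on `a`. -/
theorem GrPowInjective.mem_of_pow_apply_mem (hinj : GrPowInjective N W M) (hW : Monotone W)
    {a₀ : ℤ} (hWbot : W a₀ = ⊥) (hNW : ∀ i, ∀ v ∈ W i, N v ∈ W i) (hM : Monotone M)
    (hNM : ∀ n, ∀ v ∈ M n, N v ∈ M (n - 2)) {t : ℕ} {m : ℤ} (a : ℤ) (hat : a + t ≤ m) {v : V}
    (hv : v ∈ M (m + 1)) (hva : v ∈ W a) (hNv : (N ^ t) v ∈ M (m - 2 * t)) : v ∈ M m := by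
  induction a using Int.strongRec (m := a₀) generalizing v with
  | lt a ha =>
    have hv0 : v = 0 := by simpa [hWbot] using hW ha.le hva
    simp [hv0]
  | ge a _ ih =>
    obtain ⟨j, hj⟩ : ∃ j : ℕ, (j : ℤ) = m + 1 - a := ⟨(m + 1 - a).toNat, by omega⟩
    have hNjv : (N ^ j) v ∈ M (a - j - 1) ⊓ W a := by
      refine ⟨?_, Module.End.pow_apply_mem_of_forall_mem j (hNW a) v hva⟩
      rw [← pow_sub_mul_pow N (show t ≤ j by omega), Module.End.mul_apply]
      exact Module.End.pow_apply_mem_of_add_mul_eq hNM (j - t) (by omega) hNv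
    obtain ⟨c, ⟨hc, -⟩, w, hwW, rfl⟩ := Submodule.mem_sup.mp <|
      hinj a j v (by rwa [show a + j = m + 1 by omega]) hva (Submodule.mem_sup_left hNjv)
    rw [show a + j - 1 = m by omega] at hc
    have hw : w ∈ M (m + 1) := by simpa using sub_mem hv (hM (by omega) hc)
    have hNw : (N ^ t) w ∈ M (m - 2 * t) := by
      simpa using sub_mem hNv (Module.End.pow_apply_mem_of_add_mul_eq hNM t (by ring) hc)
    exact add_mem hc (ih (a - 1) (by omega) (by omega) hw hwW hNw)

theorem GrPowSurjective.inf_le_of_lt (hsurj : GrPowSurjective N W M) (hM : Monotone M) {b : ℤ}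
    (hMbot : M b = ⊥) (hNM : ∀ n, ∀ v ∈ M n, N v ∈ M (n - 2)) (hM' : Monotone M')
    (hNM' : ∀ n, ∀ v ∈ M' n, N v ∈ M' (n - 2)) {i : ℤ}
    (hbelow : ∀ l, M l ⊓ W (i - 1) ≤ M' l) (l : ℤ) (hli : l < i)
    (habove : ∀ l', 2 * i - l ≤ l' → M l' ⊓ W i ≤ M' l') : M l ⊓ W i ≤ M' l := by
  induction l using Int.strongRec (m := b) with
  | lt l hl => exact inf_le_left.trans ((hM hl.le).trans (hMbot.le.trans bot_le))
  | ge l _ ih =>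
    rintro x ⟨hx, hxW⟩
    obtain ⟨j, rfl⟩ : ∃ j : ℕ, l = i - j := ⟨(i - l).toNat, by omega⟩
    obtain ⟨v, hv, hvW, hNv⟩ := hsurj i j x hx hxW
    obtain ⟨c, ⟨hc, hcW⟩, w, hwW, hcw⟩ := Submodule.mem_sup.mp hNv
    have hx_eq : x = (N ^ j) v - (c + w) := by rw [hcw]; abel
    have hv' : v ∈ M' (i + j) := habove _ (by omega) ⟨hv, hvW⟩
    have hc' : c ∈ M' (i - j) :=
      hM' (by omega) (ih _ (by omega) (by omega) (fun l' hl' ↦ habove l' (by omega)) ⟨hc, hcW⟩)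
    have hw : w ∈ M (i - j) := by
      have hNjv := Module.End.pow_apply_mem_of_add_mul_eq hNM j (m := i - j) (by ring) hv
      simpa [hx_eq] using sub_mem (sub_mem hNjv hx) (hM (by omega) hc)
    have hNjv' := Module.End.pow_apply_mem_of_add_mul_eq hNM' j (m := i - j) (by ring) hv'
    rw [hx_eq]
    exact sub_mem hNjv' (add_mem hc' (hbelow _ ⟨hw, hwW⟩))

theorem inf_le_of_forall_lt_of_forall_inf_pred_le (hsurj : GrPowSurjective N W M)
    (hinj : GrPowInjective N W M') (hW : Monotone W) {a : ℤ} (hWbot : W a = ⊥)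
    (hNW : ∀ i, ∀ v ∈ W i, N v ∈ W i) (hM : Monotone M) {b : ℤ} (hMbot : M b = ⊥)
    (hNM : ∀ n, ∀ v ∈ M n, N v ∈ M (n - 2)) (hM' : Monotone M')
    (hNM' : ∀ n, ∀ v ∈ M' n, N v ∈ M' (n - 2)) {i l : ℤ}
    (habove : ∀ l', l < l' → M l' ⊓ W i ≤ M' l') (hbelow : ∀ l', M l' ⊓ W (i - 1) ≤ M' l') :
    M l ⊓ W i ≤ M' l := by
  have hlow := hsurj.inf_le_of_lt hM hMbot hNM hM' hNM' hbelow
  rcases lt_or_ge l i with hli | hil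
  · exact hlow l hli fun l' hl' ↦ habove l' (by omega)
  obtain ⟨t, ht⟩ : ∃ t : ℕ, (t : ℤ) = l - i + 1 := ⟨(l - i + 1).toNat, by omega⟩
  rintro x ⟨hx, hxW⟩
  have hx' : x ∈ M' (i + t) := habove _ (by omega) ⟨hM (by omega) hx, hxW⟩
  have hNxW := Module.End.pow_apply_mem_of_forall_mem t (hNW i) x hxW
  have hNx : (N ^ t) x ∈ M' (i - t - 1) :=
    hlow _ (by omega) (fun l' hl' ↦ habove l' (by omega))
      ⟨Module.End.pow_apply_mem_of_add_mul_eq hNM t (by omega) hx, hNxW⟩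
  obtain ⟨c, ⟨hc, -⟩, e, heW, rfl⟩ :=
    Submodule.mem_sup.mp (hinj i t x hx' hxW (Submodule.mem_sup_left ⟨hNx, hNxW⟩))
  rw [show i + t - 1 = l by omega] at hc
  have he : e ∈ M' (l + 1) := by
    rw [show l + 1 = i + t by omega]
    simpa using sub_mem hx' (hM' (by omega) hc)
  have hNe : (N ^ t) e ∈ M' (l - 2 * t) := by
    have hNx' : (N ^ t) (c + e) ∈ M' (l - 2 * t) := by rwa [show l - 2 * t = i - t - 1 by omega]
    have hNc := Module.End.pow_apply_mem_of_add_mul_eq hNM' t (m := l - 2 * t) (by ring) hc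
    simpa using sub_mem hNx' hNc
  exact add_mem hc (hinj.mem_of_pow_apply_mem hW hWbot hNW hM' hNM' (i - 1) (by omega) he heW hNe)

theorem le_of_grPowSurjective_of_grPowInjective (hsurj : GrPowSurjective N W M)
    (hinj : GrPowInjective N W M') (hW : Monotone W) {a a' : ℤ} (hWbot : W a = ⊥)
    (hWtop : W a' = ⊤) (hNW : ∀ i, ∀ v ∈ W i, N v ∈ W i) (hM : Monotone M) {b : ℤ}
    (hMbot : M b = ⊥) (hNM : ∀ n, ∀ v ∈ M n, N v ∈ M (n - 2)) (hM' : Monotone M') {b' : ℤ}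
    (hM'top : M' b' = ⊤) (hNM' : ∀ n, ∀ v ∈ M' n, N v ∈ M' (n - 2)) : M ≤ M' := by
  have hWi : ∀ i l, M l ⊓ W i ≤ M' l := by
    intro i
    induction i using Int.strongRec (m := a) with
    | lt i hi => exact fun l ↦ inf_le_right.trans ((hW hi.le).trans (hWbot.le.trans bot_le))
    | ge i _ ihi =>
      intro l
      obtain ⟨d, rfl⟩ : ∃ d, l = b' - d := ⟨b' - l, by ring⟩
      induction d using Int.strongRec (m := 0) with
      | lt d hd => exact le_top.trans (hM'top.symm.le.trans (hM' (by omega)))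
      | ge d _ ihd =>
        refine inf_le_of_forall_lt_of_forall_inf_pred_le hsurj hinj hW hWbot hNW hM hMbot hNM hM'
          hNM' (fun l' hl' ↦ ?_) (ihi (i - 1) (by omega))
        simpa using ihd (b' - l') (by omega)
  intro l
  simpa [hWtop] using hWi a' l

end

theorem IsRelativeWeightFiltration.grPowInjective {k V : Type*} [Field k] [AddCommGroup V]
    [Module k V] {N : Module.End k V} {W M : ℤ → Submodule k V}
    (hM : IsRelativeWeightFiltration N W M) : GrPowInjective N W M :=
  fun i j ↦ (hM.2.2 i j).1

theorem IsRelativeWeightFiltration.grPowSurjective {k V : Type*} [Field k] [AddCommGroup V]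
    [Module k V] {N : Module.End k V} {W M : ℤ → Submodule k V}
    (hM : IsRelativeWeightFiltration N W M) : GrPowSurjective N W M :=
  fun i j ↦ (hM.2.2 i j).2

theorem IsRelativeWeightFiltration.le {k V : Type*} [Field k] [AddCommGroup V] [Module k V]
    {N : Module.End k V} {W M M' : ℤ → Submodule k V} (hWf : IsIntFiltration W)
    (hNW : ∀ i, ∀ v ∈ W i, N v ∈ W i) (hM : IsRelativeWeightFiltration N W M)
    (hM' : IsRelativeWeightFiltration N W M') : M ≤ M' := by
  obtain ⟨hW, ⟨_, hWbot⟩, ⟨_, hWtop⟩⟩ := hWf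
  obtain ⟨hMm, ⟨_, hMbot⟩, -⟩ := hM.1
  obtain ⟨hM'm, -, ⟨_, hM'top⟩⟩ := hM'.1
  exact le_of_grPowSurjective_of_grPowInjective hM.grPowSurjective hM'.grPowInjective hW hWbot
    hWtop hNW hMm hMbot hM.2.1 hM'm hM'top hM'.2.1

theorem relative_weight_filtration_unique_general {k V : Type*} [Field k]
    [AddCommGroup V] [Module k V]
    (N : Module.End k V)
    (W : ℤ → Submodule k V) (hWf : IsIntFiltration W)
    (hNW : ∀ i : ℤ, ∀ v ∈ W i, N v ∈ W i)
    (M M' : ℤ → Submodule k V)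
    (hM : IsRelativeWeightFiltration N W M)
    (hM' : IsRelativeWeightFiltration N W M') :
    M = M' :=
  le_antisymm (hM.le hWf hNW hM') (hM'.le hWf hNW hM)

/-- Uniqueness of the relative weight monodromy filtration `M(N, W)`. -/
theorem relative_weight_filtration_unique {k V : Type*} [Field k]
    [AddCommGroup V] [Module k V] [FiniteDimensional k V]
    (N : Module.End k V) (hN : IsNilpotent N)
    (W : ℤ → Submodule k V) (hWf : IsIntFiltration W)
    (hNW : ∀ i : ℤ, ∀ v ∈ W i, N v ∈ W i)
    (M M' : ℤ → Submodule k V)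
    (hM : IsRelativeWeightFiltration N W M)
    (hM' : IsRelativeWeightFiltration N W M') :
    M = M' :=
  relative_weight_filtration_unique_general N W hWf hNW M M' hM hM'
end

section
/- Every mixed Hodge structure in linear-algebra form (V, σ, W, F) admits a Deligne bigrading (I^{p,q})_{(p,q)∈ℤ×ℤ}. -/
/-- A conjugation on a complex vector space: an additive involution which is
semilinear with respect to complex conjugation. -/
def IsConjugation {V : Type*} [AddCommGroup V] [Module ℂ V] (σ : V → V) : Prop :=
  (∀ v w : V, σ (v + w) = σ v + σ w) ∧
  (∀ (c : ℂ) (v : V), σ (c • v) = (starRingEnd ℂ) c • σ v) ∧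
  (∀ v : V, σ (σ v) = v)

/-- A mixed Hodge structure in linear-algebra form on `(V, σ)`: an increasing,
exhaustive, σ-invariant weight filtration `W` and a decreasing, exhaustive Hodge
filtration `F` such that for all `k, p` one has
`Gr_k = F^p Gr_k ⊕ σ_k (F^{k-p+1} Gr_k)` (stated elementwise inside `V`:
the two pieces together with `W (k-1)` span `W k`, and they intersect only
in `W (k-1)`). -/
def IsMHS {V : Type*} [AddCommGroup V] [Module ℂ V]
    (σ : V → V) (W F : ℤ → Submodule ℂ V) : Prop :=
  IsConjugation σ ∧
  Monotone W ∧
  (∀ k : ℤ, ∀ v ∈ W k, σ v ∈ W k) ∧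
  (∃ a : ℤ, W a = ⊥) ∧ (∃ b : ℤ, W b = ⊤) ∧
  Antitone F ∧
  (∃ p : ℤ, F p = ⊤) ∧ (∃ q : ℤ, F q = ⊥) ∧
  (∀ k p : ℤ,
    (∀ v ∈ W k, ∃ x ∈ F p ⊓ W k, ∃ y ∈ F (k - p + 1) ⊓ W k, v - x - σ y ∈ W (k - 1)) ∧
    (∀ x ∈ F p ⊓ W k, ∀ y ∈ F (k - p + 1) ⊓ W k, x - σ y ∈ W (k - 1) → x ∈ W (k - 1)))

/-- A Deligne bigrading of the mixed Hodge structure `(V, σ, W, F)`: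
a family of subspaces `I^{p,q}` giving an internal direct sum decomposition of `V`
with `F^p = ⊕_{a ≥ p} I^{a,b}`, `W_k = ⊕_{a+b ≤ k} I^{a,b}`, and
`σ(I^{p,q}) ⊆ I^{q,p} + Σ_{r<q, s<p} I^{r,s}`. -/
def IsDeligneBigrading {V : Type*} [AddCommGroup V] [Module ℂ V]
    (σ : V → V) (W F : ℤ → Submodule ℂ V) (I : ℤ × ℤ → Submodule ℂ V) : Prop :=
  (⨆ pq : ℤ × ℤ, I pq) = ⊤ ∧
  (∀ pq : ℤ × ℤ, Disjoint (I pq) (⨆ pq' : ℤ × ℤ, ⨆ _ : pq' ≠ pq, I pq')) ∧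
  (∀ p : ℤ, F p = ⨆ ab : ℤ × ℤ, ⨆ _ : p ≤ ab.1, I ab) ∧
  (∀ k : ℤ, W k = ⨆ ab : ℤ × ℤ, ⨆ _ : ab.1 + ab.2 ≤ k, I ab) ∧
  (∀ p q : ℤ, ∀ v ∈ I (p, q),
    σ v ∈ I (q, p) ⊔ ⨆ rs : ℤ × ℤ, ⨆ _ : rs.1 < q ∧ rs.2 < p, I rs)

/-!
The bigrading is Deligne's. Put `U p m = Σ_{i ≤ m} F^{i-p+1} ∩ W_i`. Descending along `W` with the
Hodge decomposition of each `Gr_k` shows `W_m = F^p ∩ W_m + σ(U p m)`, and the opposedness of `F`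
and `σF` on each `Gr_k` shows `F^p ∩ σ(U p m) = 0`. With
`I^{p,q} = F^p ∩ W_{p+q} ∩ σ(F^q ∩ W_{p+q} + U p (p+q-1))`, every class of `Gr_{p+q}` lying in both
`F^p` and `σF^q` lifts to `I^{p,q}`, which gives `F^p ∩ W_k = Σ_{a ≥ p, a+b ≤ k} I^{a,b}`; and
`I^{p,q}` meets `W_{p+q-1} + F^{p+1} ∩ W_{p+q}` trivially, which gives independence once the pieces
are ordered by weight and then by decreasing `p`. Finally, for `v ∈ I^{p,q}`, `σ v = u + R` with
`u ∈ I^{q,p}`, `R ∈ U p (p+q-1)` and `σ R ∈ U q (p+q-1)`. By induction on the weight, `R` then lies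
both in the span of the `I^{r,s}` with `s < p` and in the span of those with `r < q`, and by
independence these two spans meet in the span of the `I^{r,s}` with `r < q` and `s < p`.
-/

section Lattice

variable {ι α : Type*} [CompleteLattice α] [IsModularLattice α] [IsCompactlyGenerated α]

theorem iSupIndep_of_disjoint_iSup_lt {κ : Type*} [LinearOrder κ] {f : ι → α} (key : ι → κ)
    (hkey : Function.Injective key) (h : ∀ i, Disjoint (f i) (⨆ j, ⨆ _ : key j < key i, f j)) :
    iSupIndep f := by
  classical
  refine iSupIndep_iff_supIndep.mpr fun s => ?_
  induction s using Finset.induction_on_max_value key with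
  | empty => exact Finset.supIndep_empty f
  | insert i s hi hmax ih =>
    refine ih.insert ((h i).mono_right (Finset.sup_le fun j hj => ?_))
    have hlt : key j < key i := (hmax j hj).lt_of_ne (hkey.ne (ne_of_mem_of_not_mem hj hi))
    exact le_iSup₂_of_le j hlt le_rfl

theorem iSupIndep.iSup_inf_iSup {f : ι → α} (hf : iSupIndep f) (P Q : ι → Prop) :
    (⨆ i, ⨆ _ : P i, f i) ⊓ (⨆ i, ⨆ _ : Q i, f i) = ⨆ i, ⨆ _ : P i ∧ Q i, f i := by
  refine le_antisymm ?_ (le_inf (iSup₂_le fun i hi => le_iSup₂_of_le i hi.1 le_rfl)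
    (iSup₂_le fun i hi => le_iSup₂_of_le i hi.2 le_rfl))
  have hsplit : ⨆ i, ⨆ _ : P i, f i ≤
      (⨆ i, ⨆ _ : P i ∧ Q i, f i) ⊔ ⨆ i, ⨆ _ : P i ∧ ¬Q i, f i := by
    refine iSup₂_le fun i hi => ?_
    by_cases hQ : Q i
    · exact le_sup_of_le_left (le_iSup₂_of_le i ⟨hi, hQ⟩ le_rfl)
    · exact le_sup_of_le_right (le_iSup₂_of_le i ⟨hi, hQ⟩ le_rfl)
  have hdisj : Disjoint (⨆ i, ⨆ _ : P i ∧ ¬Q i, f i) (⨆ i, ⨆ _ : Q i, f i) :=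
    hf.disjoint_biSup_biSup (s := {i | P i ∧ ¬Q i}) (t := {i | Q i})
      (Set.disjoint_left.mpr fun _ hi => hi.2)
  calc (⨆ i, ⨆ _ : P i, f i) ⊓ (⨆ i, ⨆ _ : Q i, f i)
      ≤ ((⨆ i, ⨆ _ : P i ∧ Q i, f i) ⊔ ⨆ i, ⨆ _ : P i ∧ ¬Q i, f i) ⊓ ⨆ i, ⨆ _ : Q i, f i :=
        inf_le_inf_right _ hsplit
    _ = (⨆ i, ⨆ _ : P i ∧ Q i, f i) ⊔ (⨆ i, ⨆ _ : P i ∧ ¬Q i, f i) ⊓ ⨆ i, ⨆ _ : Q i, f i :=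
        sup_inf_assoc_of_le _ (iSup₂_le fun i hi => le_iSup₂_of_le i hi.2 le_rfl)
    _ = ⨆ i, ⨆ _ : P i ∧ Q i, f i := by rw [hdisj.eq_bot, sup_bot_eq]

end Lattice

section HodgeTail

variable {V : Type*} [AddCommGroup V] [Module ℂ V] (W F : ℤ → Submodule ℂ V)

def hodgeTail (p m : ℤ) : Submodule ℂ V :=
  ⨆ i, ⨆ _ : i ≤ m, F (i - p + 1) ⊓ W i

variable {W F}

theorem F_inf_W_le_hodgeTail {p r i m : ℤ} (hr : r + p = i + 1) (hi : i ≤ m) :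
    F r ⊓ W i ≤ hodgeTail W F p m :=
  le_iSup₂_of_le i hi (by rw [show i - p + 1 = r by omega])

theorem hodgeTail_mono (p : ℤ) {m m' : ℤ} (hm : m ≤ m') :
    hodgeTail W F p m ≤ hodgeTail W F p m' :=
  iSup₂_le fun i hi => le_iSup₂_of_le i (hi.trans hm) le_rfl

theorem hodgeTail_le_W (hW : Monotone W) (p m : ℤ) : hodgeTail W F p m ≤ W m :=
  iSup₂_le fun _ hi => inf_le_right.trans (hW hi)

theorem hodgeTail_eq_sup (p m : ℤ) :
    hodgeTail W F p m = F (m - p + 1) ⊓ W m ⊔ hodgeTail W F p (m - 1) := by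
  refine le_antisymm (iSup₂_le fun i hi => ?_)
    (sup_le (F_inf_W_le_hodgeTail (by omega) le_rfl) (hodgeTail_mono p (by omega)))
  rcases hi.eq_or_lt with rfl | hlt
  · exact le_sup_left
  · exact le_sup_of_le_right (le_iSup₂_of_le i (by omega) le_rfl)

end HodgeTail

namespace IsMHS

variable {V : Type*} [AddCommGroup V] [Module ℂ V] {σ : V → V} {W F : ℤ → Submodule ℂ V}
  (h : IsMHS σ W F)
include h

def conj : V →ₛₗ[starRingEnd ℂ] V where
  toFun := σ
  map_add' := h.1.1
  map_smul' := h.1.2.1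

theorem conj_conj (v : V) : σ (σ v) = v := h.1.2.2 v

theorem conj_zero : σ 0 = 0 := map_zero h.conj

theorem conj_add (v w : V) : σ (v + w) = σ v + σ w := map_add h.conj v w

theorem conj_sub (v w : V) : σ (v - w) = σ v - σ w := map_sub h.conj v w

theorem monotone_W : Monotone W := h.2.1

theorem conj_mem_W {k : ℤ} {v : V} (hv : v ∈ W k) : σ v ∈ W k := h.2.2.1 k v hv

theorem antitone_F : Antitone F := h.2.2.2.2.2.1

theorem exists_sub_sub_conj_mem_W (k p : ℤ) {v : V} (hv : v ∈ W k) :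
    ∃ x ∈ F p ⊓ W k, ∃ y ∈ F (k - p + 1) ⊓ W k, v - x - σ y ∈ W (k - 1) :=
  (h.2.2.2.2.2.2.2.2 k p).1 v hv

theorem mem_W_of_sub_conj_mem_W {k p : ℤ} {x y : V} (hx : x ∈ F p ⊓ W k)
    (hy : y ∈ F (k - p + 1) ⊓ W k) (hxy : x - σ y ∈ W (k - 1)) : x ∈ W (k - 1) :=
  (h.2.2.2.2.2.2.2.2 k p).2 x hx y hy hxy

theorem exists_W_eq_bot : ∃ a, W a = ⊥ := h.2.2.2.1

theorem exists_W_eq_top : ∃ b, W b = ⊤ := h.2.2.2.2.1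

theorem exists_F_eq_top : ∃ p, F p = ⊤ := h.2.2.2.2.2.2.1

theorem exists_F_eq_bot : ∃ q, F q = ⊥ := h.2.2.2.2.2.2.2.1

theorem weight_induction {P : ℤ → Prop} (bot : ∀ k, W k = ⊥ → P k)
    (step : ∀ k, P (k - 1) → P k) (k : ℤ) : P k := by
  obtain ⟨a, ha⟩ := h.exists_W_eq_bot
  have below : ∀ k ≤ a, P k := fun k hk => bot k (le_bot_iff.mp (ha ▸ h.monotone_W hk))
  rcases le_or_gt k a with hk | hk
  · exact below k hk
  · refine Int.leInduction (m := a) (motive := fun k _ => P k) (below a le_rfl)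
      (fun k _ ih => step (k + 1) (by simpa using ih)) k hk.le

theorem hodge_induction {P : ℤ → Prop} (bot : ∀ p, F p = ⊥ → P p)
    (step : ∀ p, P (p + 1) → P p) (p : ℤ) : P p := by
  obtain ⟨b, hb⟩ := h.exists_F_eq_bot
  have above : ∀ p, b ≤ p → P p := fun p hp => bot p (le_bot_iff.mp (hb ▸ h.antitone_F hp))
  rcases le_or_gt b p with hp | hp
  · exact above p hp
  · refine Int.leInductionDown (m := b) (motive := fun p _ => P p) (above b le_rfl)
      (fun p _ ih => step (p - 1) (by simpa using ih)) p hp.le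

theorem mem_W_of_conj_mem_hodgeTail {p m : ℤ} {v : V} (hv : σ v ∈ hodgeTail W F p m) :
    v ∈ W m := by
  simpa [h.conj_conj] using h.conj_mem_W (hodgeTail_le_W h.monotone_W p m hv)

theorem exists_conj_sub_mem_hodgeTail (p m : ℤ) {z : V} (hz : z ∈ W m) :
    ∃ x ∈ F p ⊓ W m, σ (z - x) ∈ hodgeTail W F p m := by
  induction m using h.weight_induction generalizing z with
  | bot m hm =>
    obtain rfl : z = 0 := by simpa [hm] using hz
    exact ⟨0, zero_mem _, by simp [h.conj_zero]⟩
  | step m ih =>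
    obtain ⟨x, hx, y, hy, hxy⟩ := h.exists_sub_sub_conj_mem_W m p hz
    obtain ⟨x', hx', hx'y⟩ := ih hxy
    refine ⟨x + x', add_mem hx ⟨hx'.1, h.monotone_W (by omega) hx'.2⟩, ?_⟩
    have hdecomp : σ (z - (x + x')) = y + σ (z - x - σ y - x') := by
      simp only [h.conj_sub, h.conj_add, h.conj_conj]; abel
    rw [hdecomp, hodgeTail_eq_sup]
    exact Submodule.add_mem_sup hy hx'y

theorem eq_zero_of_mem_F_of_conj_mem_hodgeTail {p m : ℤ} {v : V} (hvF : v ∈ F p)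
    (hv : σ v ∈ hodgeTail W F p m) : v = 0 := by
  induction m using h.weight_induction generalizing v with
  | bot m hm =>
    have hσv : σ v = 0 := by simpa [hm] using hodgeTail_le_W h.monotone_W p m hv
    rw [← h.conj_conj v, hσv, h.conj_zero]
  | step m ih =>
    have hvW := h.mem_W_of_conj_mem_hodgeTail hv
    rw [hodgeTail_eq_sup] at hv
    obtain ⟨c, hc, t, ht, hct⟩ := Submodule.mem_sup.mp hv
    have htW := hodgeTail_le_W h.monotone_W p (m - 1) ht
    have hv_low : v ∈ W (m - 1) := by
      refine h.mem_W_of_sub_conj_mem_W ⟨hvF, hvW⟩ hc ?_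
      have : v - σ c = σ t := by rw [← h.conj_conj v, ← hct, h.conj_add]; abel
      exact this ▸ h.conj_mem_W htW
    have hc_low : c ∈ hodgeTail W F p (m - 1) := by
      refine F_inf_W_le_hodgeTail (r := m - p) (by omega) le_rfl ⟨h.antitone_F (by omega) hc.1, ?_⟩
      rw [show c = σ v - t by rw [← hct]; abel]
      exact sub_mem (h.conj_mem_W hv_low) htW
    exact ih hvF (hct ▸ add_mem hc_low ht)

/-- `σ(F^q ∩ W_{p+q} + U p (p+q-1))` is written as a preimage, `σ` being an involution. Deligne
writes `U p (p+q-2)` instead; this is the same space, as the extra term `F^q ∩ W_{p+q-1}` already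
lies in `F^q ∩ W_{p+q}`. -/
def deligneI (pq : ℤ × ℤ) : Submodule ℂ V :=
  F pq.1 ⊓ W (pq.1 + pq.2) ⊓
    (F pq.2 ⊓ W (pq.1 + pq.2) ⊔ hodgeTail W F pq.1 (pq.1 + pq.2 - 1)).comap h.conj

theorem mem_deligneI {p q k : ℤ} (hk : p + q = k) {v : V} :
    v ∈ h.deligneI (p, q) ↔
      v ∈ F p ∧ v ∈ W k ∧ σ v ∈ F q ⊓ W k ⊔ hodgeTail W F p (k - 1) := by
  subst hk
  exact and_assoc

theorem deligneI_le_F (pq : ℤ × ℤ) : h.deligneI pq ≤ F pq.1 :=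
  inf_le_left.trans inf_le_left

theorem deligneI_le_W (pq : ℤ × ℤ) : h.deligneI pq ≤ W (pq.1 + pq.2) :=
  inf_le_left.trans inf_le_right

theorem disjoint_deligneI_W (p q : ℤ) : Disjoint (h.deligneI (p, q)) (W (p + q - 1)) := by
  refine Submodule.disjoint_def.mpr fun v hv hv_low => ?_
  obtain ⟨hvF, -, hσv⟩ := (h.mem_deligneI rfl).mp hv
  obtain ⟨c, hc, t, ht, hct⟩ := Submodule.mem_sup.mp hσv
  have htW := hodgeTail_le_W h.monotone_W p (p + q - 1) ht
  have hc_low : c ∈ hodgeTail W F p (p + q - 1) := by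
    refine F_inf_W_le_hodgeTail (by omega) le_rfl ⟨hc.1, ?_⟩
    rw [show c = σ v - t by rw [← hct]; abel]
    exact sub_mem (h.conj_mem_W hv_low) htW
  exact h.eq_zero_of_mem_F_of_conj_mem_hodgeTail hvF (hct ▸ add_mem hc_low ht)

theorem disjoint_deligneI (p q : ℤ) :
    Disjoint (h.deligneI (p, q)) (W (p + q - 1) ⊔ F (p + 1) ⊓ W (p + q)) := by
  refine Submodule.disjoint_def.mpr fun v hv hv' => ?_
  obtain ⟨w, hw, x, hx, rfl⟩ := Submodule.mem_sup.mp hv'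
  obtain ⟨-, -, hσv⟩ := (h.mem_deligneI rfl).mp hv
  obtain ⟨c, hc, t, ht, hct⟩ := Submodule.mem_sup.mp hσv
  have hx_low : x ∈ W (p + q - 1) := by
    refine h.mem_W_of_sub_conj_mem_W hx (by rwa [show p + q - (p + 1) + 1 = q by ring]) ?_
    have : x - σ c = σ t - w := by
      rw [show c = σ (w + x) - t by rw [← hct]; abel, h.conj_sub, h.conj_conj]; abel
    exact this ▸ sub_mem (h.conj_mem_W (hodgeTail_le_W h.monotone_W p _ ht)) hw
  exact Submodule.disjoint_def.mp (h.disjoint_deligneI_W p q) _ hv (add_mem hw hx_low)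

theorem exists_deligneI_sub_mem {p q k : ℤ} (hk : p + q = k) {v w : V} (hv : v ∈ F p ⊓ W k)
    (hw : w ∈ F q ⊓ W k) (hvw : v - σ w ∈ W (k - 1)) :
    ∃ u ∈ h.deligneI (p, q), v - u ∈ F p ⊓ W (k - 1) := by
  obtain ⟨x, hx, hσ⟩ := h.exists_conj_sub_mem_hodgeTail p (k - 1) hvw
  refine ⟨v - x, (h.mem_deligneI hk).mpr ⟨sub_mem hv.1 hx.1,
    sub_mem hv.2 (h.monotone_W (by omega) hx.2), ?_⟩, by simpa using hx⟩
  have : σ (v - x) = w + σ (v - σ w - x) := by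
    simp only [h.conj_sub, h.conj_conj]; abel
  exact this ▸ Submodule.add_mem_sup hw hσ

theorem F_inf_W_le_deligneI_sup (p k : ℤ) :
    F p ⊓ W k ≤ h.deligneI (p, k - p) ⊔ F (p + 1) ⊓ W k ⊔ F p ⊓ W (k - 1) := by
  intro v hv
  obtain ⟨x, hx, y, hy, hxy⟩ := h.exists_sub_sub_conj_mem_W k (p + 1) hv.2
  obtain ⟨u, hu, hvu⟩ := h.exists_deligneI_sub_mem (q := k - p) (by ring)
    ⟨sub_mem hv.1 (h.antitone_F (by omega) hx.1), sub_mem hv.2 hx.2⟩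
    (by rwa [show k - (p + 1) + 1 = k - p by ring] at hy) hxy
  have : v = u + x + (v - x - u) := by abel
  exact this ▸ Submodule.add_mem_sup (Submodule.add_mem_sup hu hx) hvu

def deligneSpan (P : ℤ × ℤ → Prop) : Submodule ℂ V :=
  ⨆ ab, ⨆ _ : P ab, h.deligneI ab

theorem deligneI_le_deligneSpan {P : ℤ × ℤ → Prop} {ab : ℤ × ℤ} (hab : P ab) :
    h.deligneI ab ≤ h.deligneSpan P :=
  le_iSup₂_of_le ab hab le_rfl

theorem deligneSpan_mono {P Q : ℤ × ℤ → Prop} (hPQ : ∀ ab, P ab → Q ab) :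
    h.deligneSpan P ≤ h.deligneSpan Q :=
  iSup₂_le fun _ hab => h.deligneI_le_deligneSpan (hPQ _ hab)

theorem deligneSpan_le_F {P : ℤ × ℤ → Prop} {p : ℤ} (hP : ∀ ab, P ab → p ≤ ab.1) :
    h.deligneSpan P ≤ F p :=
  iSup₂_le fun ab hab => (h.deligneI_le_F ab).trans (h.antitone_F (hP ab hab))

theorem deligneSpan_le_W {P : ℤ × ℤ → Prop} {k : ℤ} (hP : ∀ ab, P ab → ab.1 + ab.2 ≤ k) :
    h.deligneSpan P ≤ W k :=
  iSup₂_le fun ab hab => (h.deligneI_le_W ab).trans (h.monotone_W (hP ab hab))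

theorem F_inf_W_eq_deligneSpan (p k : ℤ) :
    F p ⊓ W k = h.deligneSpan fun ab => p ≤ ab.1 ∧ ab.1 + ab.2 ≤ k := by
  refine le_antisymm ?_ (le_inf (h.deligneSpan_le_F fun _ hab => hab.1)
    (h.deligneSpan_le_W fun _ hab => hab.2))
  induction k using h.weight_induction generalizing p with
  | bot k hk => simp [hk]
  | step k ih =>
    induction p using h.hodge_induction with
    | bot p hp => simp [hp]
    | step p ihp =>
      refine (h.F_inf_W_le_deligneI_sup p k).trans (sup_le (sup_le ?_ ?_) ?_)
      · exact h.deligneI_le_deligneSpan ⟨le_rfl, by omega⟩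
      · exact ihp.trans (h.deligneSpan_mono fun _ hab => ⟨by omega, hab.2⟩)
      · exact (ih p).trans (h.deligneSpan_mono fun _ hab => ⟨hab.1, by omega⟩)

theorem hodgeTail_le_deligneSpan (p m : ℤ) :
    hodgeTail W F p m ≤ h.deligneSpan fun ab => ab.2 < p ∧ ab.1 + ab.2 ≤ m :=
  iSup₂_le fun _ hi => (h.F_inf_W_eq_deligneSpan _ _).le.trans
    (h.deligneSpan_mono fun _ hab => ⟨by omega, by omega⟩)

theorem iSupIndep_deligneI : iSupIndep h.deligneI := by
  refine iSupIndep_of_disjoint_iSup_lt (fun ab => toLex (ab.1 + ab.2, -ab.1))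
    (fun ab cd hab => ?_) fun ⟨p, q⟩ => (h.disjoint_deligneI p q).mono_right
      (iSup₂_le fun ⟨a, b⟩ hlt => ?_)
  · simp only [toLex_inj, Prod.mk.injEq] at hab
    ext <;> omega
  · rcases Prod.Lex.toLex_lt_toLex.mp hlt with hlt | ⟨heq, hlt⟩
    · exact le_sup_of_le_left ((h.deligneI_le_W _).trans (h.monotone_W (by dsimp at hlt ⊢; omega)))
    · refine le_sup_of_le_right (le_inf ((h.deligneI_le_F _).trans (h.antitone_F ?_)) ?_)
      · dsimp at hlt ⊢; omega
      · exact (h.deligneI_le_W _).trans (le_of_eq (congrArg W heq))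

theorem deligneSpan_inf (P Q : ℤ × ℤ → Prop) :
    h.deligneSpan P ⊓ h.deligneSpan Q = h.deligneSpan fun ab => P ab ∧ Q ab :=
  h.iSupIndep_deligneI.iSup_inf_iSup P Q

theorem exists_deligneI_conj_sub_mem_hodgeTail {p q : ℤ} {v : V} (hv : v ∈ h.deligneI (p, q)) :
    ∃ u ∈ h.deligneI (q, p), σ v - u ∈ hodgeTail W F p (p + q - 1) ∧
      σ (σ v - u) ∈ hodgeTail W F q (p + q - 1) := by
  obtain ⟨hvF, hvW, hσv⟩ := (h.mem_deligneI rfl).mp hv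
  obtain ⟨c, hc, t, ht, hct⟩ := Submodule.mem_sup.mp hσv
  have htW := hodgeTail_le_W h.monotone_W p _ ht
  have hcv : c - σ v = -t := by rw [← hct]; abel
  obtain ⟨u, hu, hcu⟩ := h.exists_deligneI_sub_mem (p := q) (q := p) (by ring) hc ⟨hvF, hvW⟩
    (hcv ▸ neg_mem htW)
  have hR : σ v - u ∈ hodgeTail W F p (p + q - 1) := by
    rw [show σ v - u = (c - u) + t by rw [← hct]; abel]
    exact add_mem (F_inf_W_le_hodgeTail (by omega) le_rfl hcu) ht
  refine ⟨u, hu, hR, ?_⟩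
  obtain ⟨-, -, hσu⟩ := (h.mem_deligneI (p := q) (q := p) (add_comm q p)).mp hu
  obtain ⟨c', hc', t', ht', hct'⟩ := Submodule.mem_sup.mp hσu
  have hσR : σ (σ v - u) = (v - c') - t' := by
    rw [h.conj_sub, h.conj_conj, ← hct']; abel
  have hvc' : v - c' ∈ W (p + q - 1) := by
    rw [show v - c' = σ (σ v - u) + t' by rw [hσR]; abel]
    exact add_mem (h.conj_mem_W (hodgeTail_le_W h.monotone_W p _ hR))
      (hodgeTail_le_W h.monotone_W q _ ht')
  exact hσR ▸ sub_mem (F_inf_W_le_hodgeTail (by omega) le_rfl ⟨sub_mem hvF hc'.1, hvc'⟩) ht'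

theorem conj_mem_deligneSpan {P Q : ℤ × ℤ → Prop}
    (hPQ : ∀ ab, P ab → ∀ v ∈ h.deligneI ab, σ v ∈ h.deligneSpan Q) {w : V}
    (hw : w ∈ h.deligneSpan P) : σ w ∈ h.deligneSpan Q :=
  (iSup₂_le fun ab hab v hv => hPQ ab hab v hv : h.deligneSpan P ≤ (h.deligneSpan Q).comap h.conj)
    hw

theorem conj_mem_deligneI_sup_deligneSpan (p q : ℤ) {v : V} (hv : v ∈ h.deligneI (p, q)) :
    σ v ∈ h.deligneI (q, p) ⊔ h.deligneSpan fun rs => rs.1 < q ∧ rs.2 < p := by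
  suffices ∀ k p q, p + q ≤ k → ∀ v ∈ h.deligneI (p, q),
      σ v ∈ h.deligneI (q, p) ⊔ h.deligneSpan fun rs => rs.1 < q ∧ rs.2 < p from
    this _ p q le_rfl v hv
  intro k
  induction k using h.weight_induction with
  | bot k hk =>
    intro p q hpq v hv
    obtain rfl : v = 0 := by simpa [hk] using h.monotone_W hpq (h.deligneI_le_W _ hv)
    rw [h.conj_zero]
    exact zero_mem _
  | step k ih =>
    intro p q hpq v hv
    rcases hpq.lt_or_eq with hlt | rfl
    · exact ih p q (by omega) v hv
    obtain ⟨u, hu, hRp, hRq⟩ := h.exists_deligneI_conj_sub_mem_hodgeTail hv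
    have hRp' : σ v - u ∈ h.deligneSpan fun rs => rs.2 < p :=
      h.deligneSpan_mono (fun _ hrs => hrs.1) (h.hodgeTail_le_deligneSpan _ _ hRp)
    have hRq' : σ v - u ∈ h.deligneSpan fun rs => rs.1 < q := by
      rw [← h.conj_conj (σ v - u)]
      refine h.conj_mem_deligneSpan (fun ab hab w hw => ?_) (h.hodgeTail_le_deligneSpan _ _ hRq)
      refine sup_le (h.deligneI_le_deligneSpan hab.1)
        (h.deligneSpan_mono fun _ hrs => hrs.1.trans hab.1) (ih ab.1 ab.2 (by omega) w hw)
    have hR : σ v - u ∈ h.deligneSpan fun rs => rs.1 < q ∧ rs.2 < p := by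
      refine h.deligneSpan_mono (fun _ => And.symm) ?_
      rw [← h.deligneSpan_inf]
      exact ⟨hRp', hRq'⟩
    exact (show σ v = u + (σ v - u) by abel) ▸ Submodule.add_mem_sup hu hR

theorem iSup_deligneI_eq_top : ⨆ pq, h.deligneI pq = ⊤ := by
  obtain ⟨p, hp⟩ := h.exists_F_eq_top
  obtain ⟨k, hk⟩ := h.exists_W_eq_top
  refine eq_top_iff.mpr ?_
  calc ⊤ = F p ⊓ W k := by rw [hp, hk, inf_top_eq]
    _ = _ := h.F_inf_W_eq_deligneSpan p k
    _ ≤ ⨆ pq, h.deligneI pq := iSup₂_le fun ab _ => le_iSup h.deligneI ab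

theorem F_eq_deligneSpan (p : ℤ) : F p = h.deligneSpan fun ab => p ≤ ab.1 := by
  obtain ⟨k, hk⟩ := h.exists_W_eq_top
  refine le_antisymm ?_ (h.deligneSpan_le_F fun _ hab => hab)
  calc F p = F p ⊓ W k := by rw [hk, inf_top_eq]
    _ = _ := h.F_inf_W_eq_deligneSpan p k
    _ ≤ _ := h.deligneSpan_mono fun _ hab => hab.1

theorem W_eq_deligneSpan (k : ℤ) : W k = h.deligneSpan fun ab => ab.1 + ab.2 ≤ k := by
  obtain ⟨p, hp⟩ := h.exists_F_eq_top
  refine le_antisymm ?_ (h.deligneSpan_le_W fun _ hab => hab)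
  calc W k = F p ⊓ W k := by rw [hp, top_inf_eq]
    _ = _ := h.F_inf_W_eq_deligneSpan p k
    _ ≤ _ := h.deligneSpan_mono fun _ hab => hab.2

end IsMHS

theorem deligne_bigrading_exists_general {V : Type*} [AddCommGroup V] [Module ℂ V]
    (σ : V → V) (W F : ℤ → Submodule ℂ V) (h : IsMHS σ W F) :
    ∃ I : ℤ × ℤ → Submodule ℂ V, IsDeligneBigrading σ W F I :=
  ⟨h.deligneI, h.iSup_deligneI_eq_top, iSupIndep_def.mp h.iSupIndep_deligneI,
    h.F_eq_deligneSpan, h.W_eq_deligneSpan, h.conj_mem_deligneI_sup_deligneSpan⟩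

/-- Every mixed Hodge structure in linear-algebra form admits a Deligne bigrading. -/
theorem deligne_bigrading_exists {V : Type*} [AddCommGroup V] [Module ℂ V]
    [FiniteDimensional ℂ V]
    (σ : V → V) (W F : ℤ → Submodule ℂ V) (h : IsMHS σ W F) :
    ∃ I : ℤ × ℤ → Submodule ℂ V, IsDeligneBigrading σ W F I :=
  deligne_bigrading_exists_general σ W F h
end

section
/- Let (V, σ, W, F) and (V′, σ′, W′, F′) be mixed Hodge structures in linear-algebra form admitting Deligne bigradings (I^{p,q}) and (I′^{p,q}) respectively, and let g : V → V′ be a ℂ-linear map with g∘σ = σ′∘g, g(W_k) ⊆ W′_k for all k, and g(F^p) ⊆ F′^p for all p. Then g(I^{p,q}) ⊆ I′^{p,q} for all p, q. In particular, taking g to be the identity map of V, a mixed Hodge structure in linear-algebra form has at most one Deligne bigrading. -/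
/-! Deligne's formula `I^{p,q} = F^p ∩ W_{p+q} ∩ σ (F^q ∩ W_{p+q} + Σ_{j ≥ 2} F^{q-j+1} ∩ W_{p+q-j})`
recovers each piece of a bigrading from `σ`, `W` and `F` alone, all of which a morphism respects.
To prove the formula, expand each `F^r ∩ W_k` as the sum of the `I^{a,b}` it contains (the
`I^{a,b}` are independent in the modular lattice of subspaces). Then `σ` maps the sum in the formula
into the pieces `I^{a,b}` with `a < p` or `b ≥ q`, and of these only `I^{p,q}` satisfies
`a ≥ p`, `a + b ≤ p + q`. -/

theorem iSupIndep.biSup_inf_biSup {ι α : Type*} [CompleteLattice α] [IsModularLattice α]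
    [IsCompactlyGenerated α] {f : ι → α} (hf : iSupIndep f) (P Q : ι → Prop) :
    (⨆ i, ⨆ _ : P i, f i) ⊓ (⨆ i, ⨆ _ : Q i, f i) = ⨆ i, ⨆ _ : P i ∧ Q i, f i := by
  refine le_antisymm ?_ (le_inf (biSup_mono fun _ => And.left) (biSup_mono fun _ => And.right))
  have hsplit : (⨆ i, ⨆ _ : P i, f i) ≤
      (⨆ i, ⨆ _ : P i ∧ Q i, f i) ⊔ ⨆ i, ⨆ _ : P i ∧ ¬ Q i, f i := by
    refine iSup₂_le fun i hi => ?_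
    by_cases hq : Q i
    · exact le_sup_of_le_left (le_iSup₂_of_le i ⟨hi, hq⟩ le_rfl)
    · exact le_sup_of_le_right (le_iSup₂_of_le i ⟨hi, hq⟩ le_rfl)
  have hdisj : Disjoint (⨆ i, ⨆ _ : P i ∧ ¬ Q i, f i) (⨆ i, ⨆ _ : Q i, f i) :=
    hf.disjoint_biSup_biSup (s := {i | P i ∧ ¬ Q i}) (t := {i | Q i})
      (Set.disjoint_left.2 fun _ hi => hi.2)
  calc (⨆ i, ⨆ _ : P i, f i) ⊓ (⨆ i, ⨆ _ : Q i, f i)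
      ≤ ((⨆ i, ⨆ _ : P i ∧ Q i, f i) ⊔ ⨆ i, ⨆ _ : P i ∧ ¬ Q i, f i) ⊓
          ⨆ i, ⨆ _ : Q i, f i := inf_le_inf_right _ hsplit
    _ = (⨆ i, ⨆ _ : P i ∧ Q i, f i) ⊔
          (⨆ i, ⨆ _ : P i ∧ ¬ Q i, f i) ⊓ ⨆ i, ⨆ _ : Q i, f i :=
      sup_inf_assoc_of_le _ (biSup_mono fun _ => And.right)
    _ = ⨆ i, ⨆ _ : P i ∧ Q i, f i := by rw [hdisj.eq_bot, sup_bot_eq]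

section

variable {V : Type*} [AddCommGroup V] [Module ℂ V]

def IsConjugation.toSemilinearMap {σ : V → V} (hc : IsConjugation σ) :
    V →ₛₗ[starRingEnd ℂ] V where
  toFun := σ
  map_add' := hc.1
  map_smul' := hc.2.1

def deligneSubspace (W F : ℤ → Submodule ℂ V) (p q : ℤ) : Submodule ℂ V :=
  F q ⊓ W (p + q) ⊔ ⨆ j : ℤ, ⨆ _ : 2 ≤ j, F (q - j + 1) ⊓ W (p + q - j)

theorem deligneSubspace_le_comap {V' : Type*} [AddCommGroup V'] [Module ℂ V']
    {W F : ℤ → Submodule ℂ V} {W' F' : ℤ → Submodule ℂ V'} (g : V →ₗ[ℂ] V')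
    (hgW : ∀ k, W k ≤ (W' k).comap g) (hgF : ∀ p, F p ≤ (F' p).comap g) (p q : ℤ) :
    deligneSubspace W F p q ≤ (deligneSubspace W' F' p q).comap g := by
  refine sup_le ?_ (iSup₂_le fun j hj => ?_)
  · exact fun v hv => Submodule.mem_sup_left ⟨hgF q hv.1, hgW _ hv.2⟩
  · exact fun v hv => Submodule.mem_sup_right <| Submodule.mem_iSup_of_mem j <|
      Submodule.mem_iSup_of_mem hj ⟨hgF _ hv.1, hgW _ hv.2⟩

namespace IsDeligneBigrading

variable {σ : V → V} {W F : ℤ → Submodule ℂ V} {I : ℤ × ℤ → Submodule ℂ V}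

theorem le_hodge (hI : IsDeligneBigrading σ W F I) {r : ℤ} {ab : ℤ × ℤ} (h : r ≤ ab.1) :
    I ab ≤ F r := by
  rw [hI.2.2.1 r]
  exact le_iSup₂_of_le ab h le_rfl

theorem le_weight (hI : IsDeligneBigrading σ W F I) {k : ℤ} {ab : ℤ × ℤ}
    (h : ab.1 + ab.2 ≤ k) : I ab ≤ W k := by
  rw [hI.2.2.2.1 k]
  exact le_iSup₂_of_le ab h le_rfl

theorem hodge_inf_weight (hI : IsDeligneBigrading σ W F I) (r k : ℤ) :
    F r ⊓ W k = ⨆ ab : ℤ × ℤ, ⨆ _ : r ≤ ab.1 ∧ ab.1 + ab.2 ≤ k, I ab := by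
  rw [hI.2.2.1, hI.2.2.2.1]
  exact iSupIndep.biSup_inf_biSup hI.2.1 _ _

theorem map_conj_biSup_le (hc : IsConjugation σ) (hI : IsDeligneBigrading σ W F I)
    {P Q : ℤ × ℤ → Prop} (hPQ : ∀ r s, P (r, s) → Q (s, r) ∧ ∀ x y, x < s → y < r → Q (x, y)) :
    (⨆ ab, ⨆ _ : P ab, I ab).map hc.toSemilinearMap ≤ ⨆ ab, ⨆ _ : Q ab, I ab := by
  rw [Submodule.map_le_iff_le_comap]
  refine iSup₂_le ?_
  rintro ⟨r, s⟩ hrs v hv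
  obtain ⟨hswap, hlower⟩ := hPQ r s hrs
  refine Submodule.mem_comap.2 (SetLike.le_def.1 (sup_le ?_ ?_) (hI.2.2.2.2 r s v hv))
  · exact le_iSup₂_of_le (s, r) hswap le_rfl
  · exact biSup_mono fun xy hxy => hlower _ _ hxy.1 hxy.2

theorem sigma_mem_deligneSubspace (hI : IsDeligneBigrading σ W F I) {p q : ℤ} {v : V}
    (hv : v ∈ I (p, q)) : σ v ∈ deligneSubspace W F p q := by
  refine SetLike.le_def.1 (sup_le ?_ (iSup₂_le fun rs hrs => ?_)) (hI.2.2.2.2 p q v hv)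
  · exact le_sup_of_le_left (le_inf (hI.le_hodge le_rfl) (hI.le_weight (by simp [add_comm])))
  · refine le_sup_of_le_right (le_iSup₂_of_le (q - rs.1 + 1) (by omega) ?_)
    exact le_inf (hI.le_hodge (by omega)) (hI.le_weight (by omega))

theorem mem_of_sigma_mem_deligneSubspace (hc : IsConjugation σ)
    (hI : IsDeligneBigrading σ W F I) {p q : ℤ} {v : V} (hvF : v ∈ F p) (hvW : v ∈ W (p + q))
    (hσv : σ v ∈ deligneSubspace W F p q) : v ∈ I (p, q) := by
  have hD : deligneSubspace W F p q ≤
      ⨆ ab : ℤ × ℤ, ⨆ _ : (q ≤ ab.1 ∧ ab.1 + ab.2 ≤ p + q) ∨ ab.2 < p, I ab := by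
    rw [deligneSubspace, hI.hodge_inf_weight]
    refine sup_le (biSup_mono fun _ => Or.inl) (iSup₂_le fun j hj => ?_)
    rw [hI.hodge_inf_weight]
    exact biSup_mono fun ab hab => Or.inr (by omega)
  have hQ : v ∈ ⨆ ab : ℤ × ℤ, ⨆ _ : ab.1 < p ∨ q ≤ ab.2, I ab := by
    rw [← hc.2.2 v]
    refine hI.map_conj_biSup_le hc ?_ (Submodule.mem_map_of_mem (hD hσv))
    rintro r s (⟨hr, hrs⟩ | hs)
    · exact ⟨Or.inr hr, fun x y hx _ => Or.inl (by omega)⟩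
    · exact ⟨Or.inl hs, fun x y hx _ => Or.inl (by omega)⟩
  have hvFW : v ∈ F p ⊓ W (p + q) := ⟨hvF, hvW⟩
  rw [hI.hodge_inf_weight] at hvFW
  refine SetLike.le_def.1 (iSup₂_le ?_) ((iSupIndep.biSup_inf_biSup hI.2.1 _ _).le ⟨hvFW, hQ⟩)
  rintro ⟨a, b⟩ ⟨⟨ha, hab⟩, hpq⟩
  obtain ⟨rfl, rfl⟩ : a = p ∧ b = q := by omega
  exact le_rfl

end IsDeligneBigrading

end

theorem deligne_bigrading_functorial_general {V V' : Type*}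
    [AddCommGroup V] [Module ℂ V]
    [AddCommGroup V'] [Module ℂ V']
    (σ : V → V) (W F : ℤ → Submodule ℂ V)
    (σ' : V' → V') (W' F' : ℤ → Submodule ℂ V') (h' : IsMHS σ' W' F')
    (I : ℤ × ℤ → Submodule ℂ V) (hI : IsDeligneBigrading σ W F I)
    (I' : ℤ × ℤ → Submodule ℂ V') (hI' : IsDeligneBigrading σ' W' F' I')
    (g : V →ₗ[ℂ] V')
    (hgσ : ∀ v : V, g (σ v) = σ' (g v))
    (hgW : ∀ k : ℤ, ∀ v ∈ W k, g v ∈ W' k)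
    (hgF : ∀ p : ℤ, ∀ v ∈ F p, g v ∈ F' p) :
    ∀ p q : ℤ, ∀ v ∈ I (p, q), g v ∈ I' (p, q) := by
  intro p q v hv
  refine hI'.mem_of_sigma_mem_deligneSubspace h'.1 (hgF p v (hI.le_hodge le_rfl hv))
    (hgW _ v (hI.le_weight le_rfl hv)) ?_
  rw [← hgσ]
  exact deligneSubspace_le_comap g hgW hgF p q
    (hI.sigma_mem_deligneSubspace hv)

/-- A morphism of mixed Hodge structures (compatible with the conjugations, weight
filtrations and Hodge filtrations) is compatible with the Deligne bigradings:
`g(I^{p,q}) ⊆ I'^{p,q}` for all `p, q`. In particular (taking `g = id`) a mixed Hodge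
structure has at most one Deligne bigrading. -/
theorem deligne_bigrading_functorial {V V' : Type*}
    [AddCommGroup V] [Module ℂ V] [FiniteDimensional ℂ V]
    [AddCommGroup V'] [Module ℂ V'] [FiniteDimensional ℂ V']
    (σ : V → V) (W F : ℤ → Submodule ℂ V) (h : IsMHS σ W F)
    (σ' : V' → V') (W' F' : ℤ → Submodule ℂ V') (h' : IsMHS σ' W' F')
    (I : ℤ × ℤ → Submodule ℂ V) (hI : IsDeligneBigrading σ W F I)
    (I' : ℤ × ℤ → Submodule ℂ V') (hI' : IsDeligneBigrading σ' W' F' I')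
    (g : V →ₗ[ℂ] V')
    (hgσ : ∀ v : V, g (σ v) = σ' (g v))
    (hgW : ∀ k : ℤ, ∀ v ∈ W k, g v ∈ W' k)
    (hgF : ∀ p : ℤ, ∀ v ∈ F p, g v ∈ F' p) :
    ∀ p q : ℤ, ∀ v ∈ I (p, q), g v ∈ I' (p, q) :=
  deligne_bigrading_functorial_general σ W F σ' W' F' h' I hI I' hI' g hgσ hgW hgF
end

section
/- Let (V, σ, W, F) be a mixed Hodge structure in linear-algebra form with Deligne bigrading (I^{p,q}), and let λ ∈ Λ^{−1,−1}_{(F,W)}, so that (V, σ, W, e^λF) is a mixed Hodge structure in linear-algebra form with Deligne bigrading (Ĩ^{p,q}) := (e^λ(I^{p,q})). Then for every ℂ-linear map μ : V → V, one has μ(I^{p,q}) ⊆ Σ_{r<p, s<q} I^{r,s} for all p, q if and only if μ(Ĩ^{p,q}) ⊆ Σ_{r<p, s<q} Ĩ^{r,s} for all p, q; that is, Λ^{−1,−1}_{(F,W)} = Λ^{−1,−1}_{(e^λF,W)}. (Applied with λ = −iδ for the Deligne splitting δ, this is the statement Λ^{−1,−1}_{(F,W)} = Λ^{−1,−1}_{(F̂_δ,W)}.)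 -/
/-- `l` belongs to `Λ^{-1,-1}` of the bigrading `I`: it maps each `I^{p,q}` into
`Σ_{r<p, s<q} I^{r,s}`. -/
def LambdaMem {V : Type*} [AddCommGroup V] [Module ℂ V]
    (I : ℤ × ℤ → Submodule ℂ V) (l : Module.End ℂ V) : Prop :=
  ∀ p q : ℤ, ∀ v ∈ I (p, q),
    l v ∈ ⨆ rs : ℤ × ℤ, ⨆ _ : rs.1 < p ∧ rs.2 < q, I rs

/-!
Call an endomorphism triangular for `I` if it maps `I^{p,q}` into
`I^{p,q} + Σ_{r<p,s<q} I^{r,s}`. Triangular maps preserve every `Σ_{r<p,s<q} I^{r,s}`, so they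
form a subalgebra in which `Λ^{-1,-1}_I` is a two-sided ideal. As `l ∈ Λ^{-1,-1}_I`, both `e^l`
and its inverse `e^{-l}` are triangular. Transporting along `e^l`, `μ ∈ Λ^{-1,-1}_{e^l I}` iff
`e^{-l} μ e^l ∈ Λ^{-1,-1}_I`, and by the ideal property this holds iff `μ ∈ Λ^{-1,-1}_I`.
-/

open Finset Nat

theorem sum_inv_factorial_smul_neg_pow_mul_self {K A : Type*} [Field K] [CharZero K]
    [Ring A] [Algebra K A] {a : A} {n : ℕ} (ha : a ^ n = 0) :
    (∑ i ∈ range n, (i ! : K)⁻¹ • (-a) ^ i) * ∑ i ∈ range n, (i ! : K)⁻¹ • a ^ i = 1 :=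
    by
  -- `IsNilpotent.exp` is a `ℚ`-linear combination of powers; let `ℚ` act on `A` through `K`.
  let _ : Module ℚ A := Module.compHom A (algebraMap ℚ K)
  have hexp {b : A} (hb : b ^ n = 0) :
      ∑ i ∈ range n, (i ! : K)⁻¹ • b ^ i = IsNilpotent.exp b := by
    rw [IsNilpotent.exp_eq_sum hb]
    refine sum_congr rfl fun i _ => ?_
    change _ = algebraMap ℚ K _ • b ^ i
    simp
  rw [hexp ha, hexp (by rw [neg_pow, ha, mul_zero]), IsNilpotent.exp_neg_mul_exp_self ⟨n, ha⟩]

namespace LambdaMem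

variable {V : Type*} [AddCommGroup V] [Module ℂ V] {I : ℤ × ℤ → Submodule ℂ V}

variable (I) in
def lowerSum (p q : ℤ) : Submodule ℂ V :=
  ⨆ rs : ℤ × ℤ, ⨆ _ : rs.1 < p ∧ rs.2 < q, I rs

theorem le_lowerSum {p q r s : ℤ} (hr : r < p) (hs : s < q) : I (r, s) ≤ lowerSum I p q :=
  le_iSup₂_of_le (r, s) ⟨hr, hs⟩ le_rfl

theorem lowerSum_mono {p q p' q' : ℤ} (hp : p ≤ p') (hq : q ≤ q') :
    lowerSum I p q ≤ lowerSum I p' q' :=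
  iSup₂_le fun _ hrs => le_lowerSum (hrs.1.trans_le hp) (hrs.2.trans_le hq)

theorem lowerSum_map (e : V →ₗ[ℂ] V) (p q : ℤ) :
    lowerSum (fun pq => (I pq).map e) p q = (lowerSum I p q).map e := by
  simp only [lowerSum, Submodule.map_iSup]

variable (I) in
def IsTriangular (f : Module.End ℂ V) : Prop :=
  ∀ p q : ℤ, ∀ v ∈ I (p, q), f v ∈ I (p, q) ⊔ lowerSum I p q

theorem IsTriangular.le_comap_lowerSum {f : Module.End ℂ V} (hf : IsTriangular I f) (p q : ℤ) :
    lowerSum I p q ≤ (lowerSum I p q).comap f :=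
  iSup₂_le fun rs hrs v hv =>
    (sup_le (le_lowerSum hrs.1 hrs.2) (lowerSum_mono hrs.1.le hrs.2.le) : _ ≤ lowerSum I p q)
      (hf rs.1 rs.2 v hv)

variable (I) in
def triangular : Subalgebra ℂ (Module.End ℂ V) where
  carrier := {f | IsTriangular I f}
  mul_mem' {f g} hf hg p q v hv := by
    obtain ⟨a, ha, b, hb, hab⟩ := Submodule.mem_sup.mp (hg p q v hv)
    rw [Module.End.mul_apply, ← hab, map_add]
    exact add_mem (hf p q a ha)
      (Submodule.mem_sup_right (hf.le_comap_lowerSum p q hb))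
  add_mem' hf hg p q v hv := add_mem (hf p q v hv) (hg p q v hv)
  algebraMap_mem' c p q v hv := Submodule.mem_sup_left (by simpa using (I (p, q)).smul_mem c hv)

theorem mem_triangular {f : Module.End ℂ V} (hf : LambdaMem I f) : f ∈ triangular I :=
  fun p q v hv => Submodule.mem_sup_right (hf p q v hv)

theorem mul_triangular {f g : Module.End ℂ V} (hf : LambdaMem I f) (hg : g ∈ triangular I) :
    LambdaMem I (f * g) := by
  intro p q v hv
  obtain ⟨a, ha, b, hb, hab⟩ := Submodule.mem_sup.mp (hg p q v hv)
  rw [Module.End.mul_apply, ← hab, map_add]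
  exact add_mem (hf p q a ha) ((mem_triangular hf).le_comap_lowerSum p q hb)

theorem triangular_mul {f g : Module.End ℂ V} (hf : f ∈ triangular I) (hg : LambdaMem I g) :
    LambdaMem I (f * g) :=
  fun p q v hv => IsTriangular.le_comap_lowerSum hf p q (hg p q v hv)

theorem map_iff (e : V ≃ₗ[ℂ] V) (μ : Module.End ℂ V) :
    LambdaMem (fun pq => (I pq).map (e : V →ₗ[ℂ] V)) μ ↔
      LambdaMem I (e.symm.toLinearMap * μ * e.toLinearMap) := by
  refine forall₂_congr fun p q => ?_
  change (∀ v ∈ (I (p, q)).map (e : V →ₗ[ℂ] V),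
    μ v ∈ lowerSum (fun pq => (I pq).map (e : V →ₗ[ℂ] V)) p q) ↔ _
  rw [lowerSum_map]
  constructor
  · intro h w hw
    exact (Submodule.mem_map_equiv _).mp (h (e w) ⟨w, hw, rfl⟩)
  · rintro h _ ⟨w, hw, rfl⟩
    exact (Submodule.mem_map_equiv _).mpr (h w hw)

theorem conj_iff_of_mem_triangular {e : V ≃ₗ[ℂ] V} (he : e.toLinearMap ∈ triangular I)
    (he' : e.symm.toLinearMap ∈ triangular I) (μ : Module.End ℂ V) :
    LambdaMem I (e.symm.toLinearMap * μ * e.toLinearMap) ↔ LambdaMem I μ := by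
  refine ⟨fun h => ?_, fun h => mul_triangular (triangular_mul he' h) he⟩
  have he_symm : e.toLinearMap * e.symm.toLinearMap = 1 := LinearMap.ext e.apply_symm_apply
  have hμ :
      μ = e.toLinearMap * (e.symm.toLinearMap * μ * e.toLinearMap) * e.symm.toLinearMap := by
    simp only [← mul_assoc, he_symm, one_mul]
    rw [mul_assoc, he_symm, mul_one]
  rw [hμ]
  exact mul_triangular (triangular_mul he h) he'

end LambdaMem

theorem lambda_eq_lambda_of_exp_general {V : Type*} [AddCommGroup V] [Module ℂ V]
    (I : ℤ × ℤ → Submodule ℂ V)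
    (l : Module.End ℂ V) (hl : LambdaMem I l)
    (n : ℕ) (hn : l ^ n = 0) :
    ∀ μ : Module.End ℂ V,
      LambdaMem I μ ↔
      LambdaMem
        (fun pq => Submodule.map
          (∑ i ∈ Finset.range n, ((Nat.factorial i : ℂ))⁻¹ • l ^ i) (I pq)) μ := by
  intro μ
  have hexp_mem {a : Module.End ℂ V} (ha : a ∈ LambdaMem.triangular I) :
      ∑ i ∈ range n, (i ! : ℂ)⁻¹ • a ^ i ∈ LambdaMem.triangular I :=
    Subalgebra.sum_mem _ fun i _ => Subalgebra.smul_mem _ (Subalgebra.pow_mem _ ha i) _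
  have hneg : (-l) ^ n = 0 := by rw [neg_pow, hn, mul_zero]
  let e : V ≃ₗ[ℂ] V := .ofLinearMap (∑ i ∈ range n, (i ! : ℂ)⁻¹ • l ^ i)
    (∑ i ∈ range n, (i ! : ℂ)⁻¹ • (-l) ^ i)
    (by
      have h := sum_inv_factorial_smul_neg_pow_mul_self (K := ℂ) hneg
      rw [neg_neg] at h
      exact h)
    (sum_inv_factorial_smul_neg_pow_mul_self hn)
  exact (LambdaMem.conj_iff_of_mem_triangular (hexp_mem hl.mem_triangular)
    (hexp_mem (neg_mem hl.mem_triangular)) μ).symm.trans (LambdaMem.map_iff e μ).symm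

/-- For `l ∈ Λ^{-1,-1}_{(F,W)}` (with `l ^ n = 0`, so that `e^l` is the finite sum
`Σ_{i<n} l^i/i!`), the mixed Hodge structure `(V, σ, W, e^l F)` has Deligne bigrading
`Ĩ^{p,q} = e^l (I^{p,q})`, and `Λ^{-1,-1}_{(F,W)} = Λ^{-1,-1}_{(e^l F, W)}`:
a map `μ` maps each `I^{p,q}` into `Σ_{r<p,s<q} I^{r,s}` iff it maps each `Ĩ^{p,q}`
into `Σ_{r<p,s<q} Ĩ^{r,s}`. -/
theorem lambda_eq_lambda_of_exp {V : Type*} [AddCommGroup V] [Module ℂ V]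
    [FiniteDimensional ℂ V]
    (σ : V → V) (W F : ℤ → Submodule ℂ V) (h : IsMHS σ W F)
    (I : ℤ × ℤ → Submodule ℂ V) (hI : IsDeligneBigrading σ W F I)
    (l : Module.End ℂ V) (hl : LambdaMem I l)
    (n : ℕ) (hn : l ^ n = 0) :
    ∀ μ : Module.End ℂ V,
      LambdaMem I μ ↔
      LambdaMem
        (fun pq => Submodule.map
          (∑ i ∈ Finset.range n, ((Nat.factorial i : ℂ))⁻¹ • l ^ i) (I pq)) μ :=
  lambda_eq_lambda_of_exp_general I l hl n hn
end

section
/- Let V be a finite-dimensional complex vector space equipped with a conjugation σ : V → V (an additive involution with σ(c·v) = conj(c)·σ(v)), let m ∈ ℤ, and let (F^p)_{p∈ℤ} be a decreasing filtration of V by complex subspaces with F^p = V for p sufficiently small and F^p = 0 for p sufficiently large, such that V = F^p ⊕ σ(F^{m−p+1}) for every p ∈ ℤ (a pure Hodge structure of weight m). Let Q : V × V → ℂ be a ℂ-bilinear form which is nondegenerate and satisfies Q(F^p, F^{m−p+1}) = 0 for every p ∈ ℤ. Then for every p ∈ ℤ, F^p = {v ∈ V : Q(v, w) = 0 for all w ∈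 F^{m−p+1}}; that is, under Q, F^p is exactly the annihilator of F^{m−p+1} (the first Hodge–Riemann bilinear relation). -/
open Module

theorem Submodule.finrank_map_semilinearEquiv {K M N : Type*} [Semiring K] [AddCommMonoid M]
    [Module K M] [AddCommMonoid N] [Module K N] {τ τ' : K →+* K} [RingHomInvPair τ τ']
    [RingHomInvPair τ' τ] (e : M ≃ₛₗ[τ] N) (p : Submodule K M) :
    finrank K (p.map (e : M →ₛₗ[τ] N)) = finrank K p := by
  have hτ : Function.Bijective τ :=
    Function.bijective_iff_has_inverse.mpr
      ⟨τ', fun _ ↦ RingHomInvPair.comp_apply_eq, fun _ ↦ RingHomInvPair.comp_apply_eq₂⟩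
  have := lift_rank_eq_of_equiv_equiv τ (e.submoduleMap p).toAddEquiv hτ
    fun r x ↦ (e.submoduleMap p).map_smulₛₗ r x
  unfold finrank
  rw [← Cardinal.toNat_lift, ← this, Cardinal.toNat_lift]

theorem Submodule.isCompl_map_of_forall_exists_add_eq {R M : Type*} [Ring R] [AddCommGroup M]
    [Module R M] {τ : R →+* R} [RingHomSurjective τ] (f : M →ₛₗ[τ] M) {A B : Submodule R M}
    (hspan : ∀ v, ∃ x ∈ A, ∃ y ∈ B, v = x + f y)
    (hindep : ∀ x ∈ A, ∀ y ∈ B, x + f y = 0 → x = 0) :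
    IsCompl A (B.map f) := by
  constructor
  · rw [Submodule.disjoint_def]
    rintro _ hx ⟨y, hy, rfl⟩
    exact hindep _ hx (-y) (B.neg_mem hy) (by rw [map_neg, add_neg_cancel])
  · rw [codisjoint_iff, eq_top_iff]
    rintro v -
    obtain ⟨x, hx, y, hy, rfl⟩ := hspan v
    exact Submodule.add_mem_sup hx (Submodule.mem_map_of_mem hy)

namespace IsConjugation

variable {V : Type*} [AddCommGroup V] [Module ℂ V] {σ : V → V}

def toLinearEquiv (hσ : IsConjugation σ) : V ≃ₗ⋆[ℂ] V :=
  .ofInvolutive { toFun := σ, map_add' := hσ.1, map_smul' := hσ.2.1 } hσ.2.2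

end IsConjugation

theorem LinearMap.BilinForm.eq_orthogonal_of_le_of_finrank_add_eq {K V : Type*} [Field K]
    [AddCommGroup V] [Module K V] [FiniteDimensional K V] {B : LinearMap.BilinForm K V}
    (hB : B.Nondegenerate) {U W : Submodule K V} (hle : U ≤ B.orthogonal W)
    (hdim : finrank K U + finrank K W = finrank K V) : U = B.orthogonal W :=
  Submodule.eq_of_le_of_finrank_eq hle (by rw [finrank_orthogonal hB]; omega)

theorem first_hodge_riemann_bilinear_relation_general {V : Type*} [AddCommGroup V] [Module ℂ V]
    [FiniteDimensional ℂ V]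
    (σ : V → V) (hσ : IsConjugation σ) (m : ℤ)
    (F : ℤ → Submodule ℂ V)
    (hdec : ∀ p : ℤ,
      (∀ v : V, ∃ x ∈ F p, ∃ y ∈ F (m - p + 1), v = x + σ y) ∧
      (∀ x ∈ F p, ∀ y ∈ F (m - p + 1), x + σ y = 0 → x = 0))
    (Q : V →ₗ[ℂ] V →ₗ[ℂ] ℂ)
    (hQnd : (∀ v : V, (∀ w : V, Q v w = 0) → v = 0) ∧
            (∀ w : V, (∀ v : V, Q v w = 0) → w = 0))
    (hQF : ∀ p : ℤ, ∀ v ∈ F p, ∀ w ∈ F (m - p + 1), Q v w = 0) :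
    ∀ p : ℤ, ∀ v : V, v ∈ F p ↔ ∀ w ∈ F (m - p + 1), Q v w = 0 := by
  intro p
  have hcompl : IsCompl (F p) ((F (m - p + 1)).map hσ.toLinearEquiv.toLinearMap) :=
    Submodule.isCompl_map_of_forall_exists_add_eq _ (hdec p).1 (hdec p).2
  have hdim : finrank ℂ (F p) + finrank ℂ (F (m - p + 1)) = finrank ℂ V := by
    rw [← Submodule.finrank_map_semilinearEquiv hσ.toLinearEquiv (F (m - p + 1))]
    exact Submodule.finrank_add_eq_of_isCompl hcompl
  have hQ : Q.flip.Nondegenerate := LinearMap.BilinForm.Nondegenerate.flip hQnd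
  -- `B.orthogonal W = {v | ∀ w ∈ W, B w v = 0}`, hence `Q.flip`.
  have hann : F p = LinearMap.BilinForm.orthogonal Q.flip (F (m - p + 1)) :=
    LinearMap.BilinForm.eq_orthogonal_of_le_of_finrank_add_eq hQ (hQF p) hdim
  intro v
  rw [hann]
  rfl

/-- First Hodge–Riemann bilinear relation: for a pure Hodge structure of weight `m`
on `(V, σ)` (i.e. a decreasing, exhaustive filtration `F` with
`V = F^p ⊕ σ(F^{m-p+1})` for all `p`, stated elementwise) and a nondegenerate
bilinear form `Q` with `Q(F^p, F^{m-p+1}) = 0` for all `p`, the subspace `F^p` is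
exactly the annihilator of `F^{m-p+1}` under `Q`. -/
theorem first_hodge_riemann_bilinear_relation {V : Type*} [AddCommGroup V] [Module ℂ V]
    [FiniteDimensional ℂ V]
    (σ : V → V) (hσ : IsConjugation σ) (m : ℤ)
    (F : ℤ → Submodule ℂ V) (hanti : Antitone F)
    (htop : ∃ p : ℤ, F p = ⊤) (hbot : ∃ q : ℤ, F q = ⊥)
    (hdec : ∀ p : ℤ,
      (∀ v : V, ∃ x ∈ F p, ∃ y ∈ F (m - p + 1), v = x + σ y) ∧
      (∀ x ∈ F p, ∀ y ∈ F (m - p + 1), x + σ y = 0 → x = 0))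
    (Q : V →ₗ[ℂ] V →ₗ[ℂ] ℂ)
    (hQnd : (∀ v : V, (∀ w : V, Q v w = 0) → v = 0) ∧
            (∀ w : V, (∀ v : V, Q v w = 0) → w = 0))
    (hQF : ∀ p : ℤ, ∀ v ∈ F p, ∀ w ∈ F (m - p + 1), Q v w = 0) :
    ∀ p : ℤ, ∀ v : V, v ∈ F p ↔ ∀ w ∈ F (m - p + 1), Q v w = 0 :=
  first_hodge_riemann_bilinear_relation_general σ hσ m F hdec Q hQnd hQF
end

section
/- Let V and W be complex vector spaces, let A, B : V → W be surjective ℂ-linear maps, and let ζ be a function assigning to each map α : ℕ × ℕ → V and each pair of integers a, b ≥ 1 an element ζ(α, a, b) ∈ W, which is triangular in the sense that ζ(α, a, b) = ζ(α′, a, b) whenever α(j, k) = α′(j, k) for all (j, k) with j + k < a + b − 1. Then there exists a map α : ℕ × ℕ → V such that for all integers a, b ≥ 1: b·A(α(a−1, b)) − a·B(α(a, b−1)) = ζ(α, a, b). (This is the recursive solvability, given surjectivity of the two logarithmic Kodaira–Spencer maps γ_{10} and γ_{01}, of the horizontality equations for the coefficients of an admissible normal function with prescribed cohomology class in a two-parameter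 degeneration with normal-crossing, ordinary-double-point type limit mixed Hodge structure.) -/
/-!
The unknowns of total degree `n` are `α (a, n - a)`, `0 ≤ a ≤ n`, and the equations with
`a + b - 1 = n` link consecutive ones: the equation at `(a, b)` reads
`a • B (α (a, b - 1)) = b • A (α (a - 1, b)) - ζ α a b`, whose right-hand side involves only
`α (a - 1, b)` and values of lower total degree. Setting `α (0, n) = 0` and using surjectivity of
`B` (dividing by `a` over `ℂ`), the diagonal is filled in order of increasing `a`. Thus `α` is a
fixed point of the map performing one such step, which exists because every step only reads
values that are smaller for the well-founded order "total degree, then first coordinate".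
-/

open Function

theorem WellFounded.exists_isFixedPt {ι β : Type*} [Nonempty β] {r : ι → ι → Prop}
    (hr : WellFounded r) (F : (ι → β) → ι → β)
    (hF : ∀ f g i, (∀ j, r j i → f j = g j) → F f i = F g i) :
    ∃ f : ι → β, IsFixedPt F f := by
  classical
  let f : ι → β := hr.fix fun i rec =>
    F (fun j => if h : r j i then rec j h else Classical.arbitrary β) i
  refine ⟨f, funext fun i => ?_⟩
  rw [show f i = _ from hr.fix_eq _ i]
  exact hF _ _ i fun j hj => by rw [dif_pos hj]

theorem exists_nsmul_apply_eq_of_surjective {K V W : Type*} [DivisionRing K] [CharZero K]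
    [AddCommGroup V] [Module K V] [AddCommGroup W] [Module K W] {B : V →ₗ[K] W}
    (hB : Surjective B) {n : ℕ} (hn : n ≠ 0) (w : W) : ∃ v, n • B v = w := by
  obtain ⟨v, hv⟩ := hB ((n : K)⁻¹ • w)
  exact ⟨v, by rw [hv, ← Nat.cast_smul_eq_nsmul K, smul_inv_smul₀ (Nat.cast_ne_zero.mpr hn)]⟩

def degLexKey (p : ℕ × ℕ) : ℕ ×ₗ ℕ := toLex (p.1 + p.2, p.1)

theorem wellFounded_degLexKey_lt : WellFounded fun p q : ℕ × ℕ => degLexKey p < degLexKey q :=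
  wellFounded_lt.onFun

theorem degLexKey_lt_of_add_lt {p q : ℕ × ℕ} (h : p.1 + p.2 < q.1 + q.2) :
    degLexKey p < degLexKey q :=
  Prod.Lex.toLex_lt_toLex.mpr (Or.inl h)

theorem degLexKey_lt_of_fst_lt {p q : ℕ × ℕ} (h : p.1 + p.2 = q.1 + q.2) (h₁ : p.1 < q.1) :
    degLexKey p < degLexKey q :=
  Prod.Lex.toLex_lt_toLex.mpr (Or.inr ⟨h, h₁⟩)

section HorizontalityStep

variable {V W : Type*} [Zero V] [AddCommGroup W]

/-- `sol a w` is meant to solve `(a + 1) • B v = w`; then the value at `(a + 1, c)` is the one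
forced by the equation at `(a + 1, c + 1)`. -/
def horizontalityStep (A : V → W) (ζ : (ℕ × ℕ → V) → ℕ → ℕ → W) (sol : ℕ → W → V)
    (α : ℕ × ℕ → V) : ℕ × ℕ → V
  | (0, _) => 0
  | (a + 1, c) => sol a ((c + 1) • A (α (a, c + 1)) - ζ α (a + 1) (c + 1))

theorem horizontalityStep_congr {A : V → W} {ζ : (ℕ × ℕ → V) → ℕ → ℕ → W} (sol : ℕ → W → V)
    (hζ : ∀ (α α' : ℕ × ℕ → V) (a b : ℕ), 1 ≤ a → 1 ≤ b →
      (∀ j k : ℕ, j + k < a + b - 1 → α (j, k) = α' (j, k)) → ζ α a b = ζ α' a b)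
    (α α' : ℕ × ℕ → V) (p : ℕ × ℕ)
    (h : ∀ q, degLexKey q < degLexKey p → α q = α' q) :
    horizontalityStep A ζ sol α p = horizontalityStep A ζ sol α' p := by
  obtain ⟨_ | a, c⟩ := p
  · rfl
  have h_same_degree : α (a, c + 1) = α' (a, c + 1) :=
    h _ (degLexKey_lt_of_fst_lt (by simp only; omega) (Nat.lt_succ_self a))
  have h_lower_degree : ζ α (a + 1) (c + 1) = ζ α' (a + 1) (c + 1) :=
    hζ α α' _ _ (by omega) (by omega) fun j k hjk =>
      h (j, k) (degLexKey_lt_of_add_lt (by simp only at hjk ⊢; omega))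
  simp only [horizontalityStep, h_same_degree, h_lower_degree]

end HorizontalityStep

theorem horizontality_recursion_solvable_general {V W : Type*}
    [AddCommGroup V] [Module ℂ V] [AddCommGroup W] [Module ℂ W]
    (A B : V →ₗ[ℂ] W) (hB : Function.Surjective B)
    (ζ : (ℕ × ℕ → V) → ℕ → ℕ → W)
    (hζ : ∀ (α α' : ℕ × ℕ → V) (a b : ℕ), 1 ≤ a → 1 ≤ b →
      (∀ j k : ℕ, j + k < a + b - 1 → α (j, k) = α' (j, k)) → ζ α a b = ζ α' a b) :
    ∃ α : ℕ × ℕ → V, ∀ a b : ℕ, 1 ≤ a → 1 ≤ b →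
      b • A (α (a - 1, b)) - a • B (α (a, b - 1)) = ζ α a b := by
  choose sol hsol using fun (a : ℕ) (w : W) =>
    exists_nsmul_apply_eq_of_surjective (K := ℂ) hB a.succ_ne_zero w
  obtain ⟨α, hα⟩ := wellFounded_degLexKey_lt.exists_isFixedPt (horizontalityStep A ζ sol)
    (horizontalityStep_congr sol hζ)
  refine ⟨α, fun a b ha hb => ?_⟩
  obtain ⟨a, rfl⟩ := Nat.exists_eq_add_of_le' ha
  obtain ⟨c, rfl⟩ := Nat.exists_eq_add_of_le' hb
  have h_solved :
      (a + 1) • B (α (a + 1, c)) = (c + 1) • A (α (a, c + 1)) - ζ α (a + 1) (c + 1) := by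
    rw [← congrFun hα (a + 1, c)]
    exact hsol a _
  rw [Nat.add_sub_cancel, Nat.add_sub_cancel, h_solved, sub_sub_cancel]

/-- Recursive solvability of the horizontality equations: given surjective linear maps
`A, B : V → W` (the logarithmic Kodaira–Spencer maps `γ₁₀`, `γ₀₁`) and a
"triangular" right-hand side `ζ` — meaning `ζ α a b` depends only on the values
`α (j, k)` with `j + k < a + b - 1` — there exists `α : ℕ × ℕ → V` with
`b • A (α (a-1, b)) - a • B (α (a, b-1)) = ζ α a b` for all integers `a, b ≥ 1`. -/
theorem horizontality_recursion_solvable {V W : Type*}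
    [AddCommGroup V] [Module ℂ V] [AddCommGroup W] [Module ℂ W]
    (A B : V →ₗ[ℂ] W) (hA : Function.Surjective A) (hB : Function.Surjective B)
    (ζ : (ℕ × ℕ → V) → ℕ → ℕ → W)
    (hζ : ∀ (α α' : ℕ × ℕ → V) (a b : ℕ), 1 ≤ a → 1 ≤ b →
      (∀ j k : ℕ, j + k < a + b - 1 → α (j, k) = α' (j, k)) → ζ α a b = ζ α' a b) :
    ∃ α : ℕ × ℕ → V, ∀ a b : ℕ, 1 ≤ a → 1 ≤ b →
      b • A (α (a - 1, b)) - a • B (α (a, b - 1)) = ζ α a b :=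
  horizontality_recursion_solvable_general A B hB ζ hζ
end
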